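/- arXiv:2507.06655 — 7 statements merged into one kernel-verified Lean document; each statement's English description precedes it below -/
import Mathlib

section
/- Let F_q be a finite field, m and n positive integers, and a ∈ F_q* an element of multiplicative order M. Then X^m - a divides X^n - 1 in F_q[X] if and only if mM divides n. -/
open Polynomial

theorem binomial_dvd_X_pow_sub_one (F : Type*) [Field F] [Fintype F]
    (m n : ℕ) (hm : 0 < m) (hn : 0 < n) (a : F) (ha : a ≠ 0) :
    (X ^ m - C a : F[X]) ∣ (X ^ n - 1) ↔ m * orderOf a ∣ n := by
  set q := n / m with hq
  set r := n % m with hr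
  have hrm : r < m := Nat.mod_lt _ hm
  have hnd : n = m * q + r := by rw [hq, hr]; exact (Nat.div_add_mod n m).symm
  have haq : (a : F) ^ q ≠ 0 := pow_ne_zero _ ha
  have key : (X ^ m - C a : F[X]) ∣ X ^ n - C (a ^ q) * X ^ r := by
    have h1 : (X ^ m - C a : F[X]) ∣ ((X ^ m) ^ q - (C a) ^ q) * X ^ r :=
      (sub_dvd_pow_sub_pow _ _ _).mul_right _
    have h2 : (X : F[X]) ^ n - C (a ^ q) * X ^ r = ((X ^ m) ^ q - (C a) ^ q) * X ^ r := by
      rw [hnd, pow_add, pow_mul, C_pow]; ring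
    rw [h2]; exact h1
  have hiff : (X ^ m - C a : F[X]) ∣ X ^ n - 1 ↔
      (X ^ m - C a : F[X]) ∣ C (a ^ q) * X ^ r - 1 := by
    have h3 : (X : F[X]) ^ n - 1 = (X ^ n - C (a ^ q) * X ^ r) + (C (a ^ q) * X ^ r - 1) := by
      ring
    rw [h3, dvd_add_right key]
  have hdeg : degree (C (a ^ q) * X ^ r - 1 : F[X]) < degree (X ^ m - C a : F[X]) := by
    rw [degree_X_pow_sub_C hm]
    refine lt_of_le_of_lt (degree_sub_le _ _) ?_
    rw [degree_C_mul_X_pow r haq, degree_one]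
    exact max_lt (by exact_mod_cast hrm) (by exact_mod_cast hm)
  have hzero : (X ^ m - C a : F[X]) ∣ C (a ^ q) * X ^ r - 1 ↔
      (C (a ^ q) * X ^ r - 1 : F[X]) = 0 :=
    ⟨fun h => eq_zero_of_dvd_of_degree_lt h hdeg, fun h => h ▸ dvd_zero _⟩
  rw [hiff, hzero, sub_eq_zero]
  constructor
  · intro h
    have hr0 : r = 0 := by
      have := congrArg degree h
      rw [degree_C_mul_X_pow r haq, degree_one] at this
      exact_mod_cast this
    rw [hr0, pow_zero, mul_one] at h
    have haq1 : a ^ q = 1 := by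
      have := congrArg (eval 0) h
      simpa using this
    have hMq : orderOf a ∣ q := orderOf_dvd_of_pow_eq_one haq1
    obtain ⟨k, hk⟩ := hMq
    rw [hnd, hr0, hk]
    exact ⟨k, by ring⟩
  · intro h
    obtain ⟨k, hk⟩ := h
    have hn' : n = m * (orderOf a * k) := by rw [hk]; ring
    have hr0 : r = 0 := by rw [hr, hn', Nat.mul_mod_right]
    have hq' : q = orderOf a * k := by rw [hq, hn', Nat.mul_div_cancel_left _ hm]
    have haq1 : a ^ q = 1 := by rw [hq', pow_mul, pow_orderOf_eq_one, one_pow]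
    rw [hr0, haq1, pow_zero, mul_one, map_one]
end

section
/- Let F_q be a finite field of characteristic not dividing n, and let p be an odd prime not dividing q(q² - 1). Then the p-th cyclotomic polynomial Φ_p(X) over F_q has no irreducible factor of degree 1 or of the form X^m - a with a ∈ F_q*; i.e., Φ_p(X) has no binomial irreducible factors over F_q. -/
open Polynomial

theorem cyclotomic_no_binomial_factor (F : Type*) [Field F] [Fintype F]
    (p : ℕ) (hp : p.Prime) (hpodd : p ≠ 2)
    (hnd : ¬ p ∣ Fintype.card F * (Fintype.card F ^ 2 - 1)) :
    ∀ g : F[X], Irreducible g → g ∣ cyclotomic p F →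
      g.degree ≠ 1 ∧ ¬ ∃ (m : ℕ) (a : F), a ≠ 0 ∧ g = X ^ m - C a := by
  classical
  haveI := Fact.mk hp
  have hq1 : ¬ p ∣ Fintype.card F := fun h => hnd (h.mul_right _)
  have hq2 : ¬ p ∣ Fintype.card F ^ 2 - 1 := fun h => hnd (h.mul_left _)
  have hcard : 1 ≤ Fintype.card F := Fintype.card_pos
  have hqm1 : ¬ p ∣ Fintype.card F - 1 := by
    intro h
    apply hq2
    have hsq : Fintype.card F ^ 2 - 1 = (Fintype.card F + 1) * (Fintype.card F - 1) := by
      simpa using Nat.sq_sub_sq (Fintype.card F) 1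
    rw [hsq]
    exact h.mul_left _
  -- the only p-th root of unity in F is 1
  have key : ∀ c : F, c ^ p = 1 → c = 1 := by
    intro c hc
    have hc0 : c ≠ 0 := by
      intro h; rw [h, zero_pow hp.ne_zero] at hc; exact zero_ne_one hc
    set u : Fˣ := Units.mk0 c hc0 with hu_def
    have hu : u ^ p = 1 := Units.ext (by simp [hu_def, hc])
    have h1 : orderOf u ∣ p := orderOf_dvd_of_pow_eq_one hu
    have h2 : orderOf u ∣ Fintype.card F - 1 := by
      have := orderOf_dvd_card (x := u)
      rwa [Fintype.card_units] at this
    rcases hp.eq_one_or_self_of_dvd _ h1 with h | h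
    · have : u = 1 := orderOf_eq_one_iff.mp h
      have := congrArg Units.val this
      simpa [hu_def] using this
    · exact absurd (h ▸ h2) hqm1
  -- (p : F) ≠ 0
  have hpF : (p : F) ≠ 0 := by
    intro h
    have hdvd : ringChar F ∣ p := (CharP.cast_eq_zero_iff F (ringChar F) p).mp h
    have hcd : ringChar F ∣ Fintype.card F :=
      (CharP.cast_eq_zero_iff F (ringChar F) (Fintype.card F)).mp
        (FiniteField.cast_card_eq_zero F)
    rcases hp.eq_one_or_self_of_dvd _ hdvd with h1 | h1
    · exact CharP.char_ne_one F (ringChar F) h1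
    · exact hq1 (h1 ▸ hcd)
  -- Φ_p has no root in F
  have noroot : ∀ c : F, eval c (cyclotomic p F) ≠ 0 := by
    intro c h
    obtain ⟨t, ht⟩ := cyclotomic.dvd_X_pow_sub_one (n := p) (R := F)
    have hev := congrArg (eval c) ht
    simp [h] at hev
    have hcp : c ^ p = 1 := by linear_combination hev
    rw [key c hcp, eval_one_cyclotomic_prime] at h
    exact hpF h
  intro g hg hgd
  constructor
  · intro hdeg
    obtain ⟨c, hc⟩ := exists_root_of_degree_eq_one hdeg
    obtain ⟨t, ht⟩ := hgd
    exact noroot c (by rw [ht, eval_mul, hc.eq_zero, zero_mul])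
  · rintro ⟨m, a, ha, rfl⟩
    have hm : 0 < m := by
      rcases Nat.eq_zero_or_pos m with h | h
      · exfalso
        have hC : (X ^ m - C a : F[X]) = C (1 - a) := by
          rw [h, pow_zero, map_sub, map_one]
        rw [hC] at hg
        rcases eq_or_ne (1 - a) 0 with h0 | h0
        · rw [h0, map_zero] at hg; exact not_irreducible_zero hg
        · exact hg.not_isUnit (isUnit_C.mpr h0.isUnit)
      · exact h
    -- pass to the algebraic closure
    set K := AlgebraicClosure F
    set φ := algebraMap F K with hφ_def
    have hφ : Function.Injective φ := (algebraMap F K).injective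
    have hdeg : ((X ^ m - C a : F[X]).map φ).degree ≠ 0 := by
      rw [Polynomial.degree_map, degree_X_pow_sub_C hm]
      exact_mod_cast hm.ne'
    obtain ⟨α, hα⟩ := IsAlgClosed.exists_root _ hdeg
    have hroot : eval α ((X ^ m - C a : F[X]).map φ) = 0 := hα
    have hαval : α ^ m = φ a := by
      rw [Polynomial.map_sub, Polynomial.map_pow, map_X, map_C, eval_sub, eval_pow,
        eval_X, eval_C, sub_eq_zero] at hroot
      exact hroot
    obtain ⟨t, ht⟩ := hgd
    have hcycK : cyclotomic p K = ((X ^ m - C a : F[X]).map φ) * (t.map φ) := by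
      rw [← Polynomial.map_mul, ← ht, map_cyclotomic]
    have hcycα : eval α (cyclotomic p K) = 0 := by
      rw [hcycK, eval_mul, hα.eq_zero, zero_mul]
    have hαp : α ^ p = 1 := by
      obtain ⟨s, hs⟩ := cyclotomic.dvd_X_pow_sub_one (n := p) (R := K)
      have hev := congrArg (eval α) hs
      simp [hcycα] at hev
      linear_combination hev
    have hap : a ^ p = 1 := by
      apply hφ
      rw [map_pow, map_one, ← hαval, ← pow_mul, mul_comm, pow_mul, hαp, one_pow]
    have ha1 : a = 1 := key a hap
    have : eval 1 (cyclotomic p F) = 0 := by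
      rw [ht, eval_mul]
      simp [ha1]
    exact noroot 1 this
end

section
/- Let q be a power of an odd prime r, and let n be a positive integer coprime to r such that every prime divisor of n divides q² - 1. Then every irreducible factor of X^n - 1 over F_q is either a binomial (of the form X^m - a) or a trinomial (of the form X^m + aX^k + b with a, b ∈ F_q*, 0 < k < m). -/
open Polynomial

lemma aux_odd_geom_sum {Q m : ℕ} (hQ : Odd Q) (hm : Odd m) :
    Odd (∑ i ∈ Finset.range m, Q ^ i) := by
  have h : ∀ i, Q ^ i % 2 = 1 := fun i => Nat.odd_iff.mp (hQ.pow)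
  rw [Nat.odd_iff, Finset.sum_nat_mod]
  simp only [h, Finset.sum_const, Finset.card_range, smul_eq_mul, mul_one]
  exact Nat.odd_iff.mp hm

lemma aux_geom_sum_mul {Q m : ℕ} (hQ : 1 ≤ Q) :
    (∑ i ∈ Finset.range m, Q ^ i) * (Q - 1) = Q ^ m - 1 := by
  have h := geom_sum_mul (Q : ℤ) m
  have h1 : 1 ≤ Q ^ m := Nat.one_le_pow _ _ hQ
  zify [hQ, h1]
  push_cast at h ⊢
  exact h

lemma aux_key_dvd {e Q m : ℕ} (he : 0 < e) (hQodd : Odd Q) (hQ2 : 2 ≤ Q) (hm : 0 < m)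
    (hdvd : e ∣ Q ^ m - 1)
    (hprimes : ∀ p : ℕ, p.Prime → p ∣ e → p ∣ Q - 1)
    (h4 : 4 ∣ Q - 1 ∨ Odd m) : e ∣ m * (Q - 1) := by
  have hQ1 : 0 < Q - 1 := by omega
  have hQm : 0 < Q ^ m - 1 := by
    have : 2 ≤ Q ^ m := le_trans hQ2 (Nat.le_self_pow hm.ne' Q)
    omega
  rw [← Nat.factorization_le_iff_dvd he.ne' (Nat.mul_ne_zero hm.ne' hQ1.ne')]
  rw [Finsupp.le_def]
  intro p
  by_cases hpp : p.Prime
  · by_cases hpe : p ∣ e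
    · haveI := Fact.mk hpp
      have h1 : e.factorization p ≤ (Q ^ m - 1).factorization p :=
        (Nat.factorization_le_iff_dvd he.ne' hQm.ne').mpr hdvd p
      have h2 : (Q ^ m - 1).factorization p ≤ (Q - 1).factorization p + m.factorization p := by
        rcases eq_or_ne p 2 with rfl | hp2
        · rcases Nat.even_or_odd m with hmeven | hmodd
          · -- p = 2, m even, so 4 ∣ Q - 1
            have h4' : 4 ∣ Q - 1 := by
              rcases h4 with h | h
              · exact h
              · exact absurd h (Nat.not_odd_iff_even.mpr hmeven)
            have hlte := padicValNat.pow_two_sub_pow (x := Q) (y := 1)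
              (by omega) (by simpa using hprimes 2 hpp hpe) (by
                rw [Nat.two_dvd_ne_zero]; exact Nat.odd_iff.mp hQodd) hm.ne' hmeven
            simp only [one_pow] at hlte
            have hv1 : padicValNat 2 (Q + 1) = 1 := by
              have hd2 : 2 ∣ Q + 1 := by
                have := Nat.odd_iff.mp hQodd; omega
              have hnd4 : ¬ (4 ∣ Q + 1) := by omega
              have hne : Q + 1 ≠ 0 := by omega
              have hle : 1 ≤ (Q + 1).factorization 2 :=
                (Nat.Prime.pow_dvd_iff_le_factorization hpp hne).mp (by simpa using hd2)
              have hge : (Q + 1).factorization 2 ≤ 1 := by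
                by_contra hcon
                exact hnd4 (by
                  have : (2:ℕ) ^ 2 ∣ Q + 1 :=
                    (Nat.Prime.pow_dvd_iff_le_factorization hpp hne).mpr (by omega)
                  simpa using this)
              have := Nat.factorization_def (Q + 1) hpp
              omega
            rw [Nat.factorization_def _ hpp, Nat.factorization_def _ hpp,
              Nat.factorization_def _ hpp]
            omega
          · -- p = 2, m odd
            have hid := aux_geom_sum_mul (Q := Q) (m := m) (by omega)
            have hSodd : Odd (∑ i ∈ Finset.range m, Q ^ i) := aux_odd_geom_sum hQodd hmodd
            have hS0 : (∑ i ∈ Finset.range m, Q ^ i) ≠ 0 := by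
              rcases hSodd with ⟨t, ht⟩; omega
            rw [← hid, Nat.factorization_mul hS0 hQ1.ne']
            have : (∑ i ∈ Finset.range m, Q ^ i).factorization 2 = 0 :=
              Nat.factorization_eq_zero_of_not_dvd (by
                rw [Nat.two_dvd_ne_zero]; exact Nat.odd_iff.mp hSodd)
            simp [this]
        · -- p odd
          have hpodd : Odd p := hpp.odd_of_ne_two hp2
          have hxy : p ∣ Q - 1 := hprimes p hpp hpe
          have hx : ¬ p ∣ Q := by
            intro hcon
            have h1' : p ∣ Q - (Q - 1) := Nat.dvd_sub hcon hxy
            have : Q - (Q - 1) = 1 := by omega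
            rw [this, Nat.dvd_one] at h1'
            exact hpp.one_lt.ne' h1'
          have hlte := padicValNat.pow_sub_pow (p := p) hpodd
            (x := Q) (y := 1) (by omega) (by simpa using hxy) hx hm.ne'
          simp only [one_pow] at hlte
          rw [Nat.factorization_def _ hpp, Nat.factorization_def _ hpp,
            Nat.factorization_def _ hpp, hlte]
      have h3 : (Q - 1).factorization p + m.factorization p = (m * (Q - 1)).factorization p := by
        rw [Nat.factorization_mul hm.ne' hQ1.ne']; simp [add_comm]
      omega
    · simp [Nat.factorization_eq_zero_of_not_dvd hpe]
  · simp [Nat.factorization_eq_zero_of_not_prime _ hpp]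

open Polynomial

lemma aux_prime_dvd_sub_one {p q d : ℕ} (hp : p.Prime) (hq : 1 ≤ q) (hd : Odd d)
    (h1 : p ∣ q ^ d - 1) (h2 : p ∣ q ^ 2 - 1) : p ∣ q - 1 := by
  haveI := Fact.mk hp
  have hqd : 1 ≤ q ^ d := Nat.one_le_pow _ _ hq
  have hq2 : 1 ≤ q ^ 2 := Nat.one_le_pow _ _ hq
  have e1 : ((q : ZMod p)) ^ d = 1 := by
    have := (ZMod.natCast_eq_natCast_iff 1 (q ^ d) p).mpr ((Nat.modEq_iff_dvd' hqd).mpr h1)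
    push_cast at this
    exact this.symm
  have e2 : ((q : ZMod p)) ^ 2 = 1 := by
    have := (ZMod.natCast_eq_natCast_iff 1 (q ^ 2) p).mpr ((Nat.modEq_iff_dvd' hq2).mpr h2)
    push_cast at this
    exact this.symm
  have hdvd1 : orderOf ((q : ZMod p)) ∣ d := orderOf_dvd_of_pow_eq_one e1
  have hdvd2 : orderOf ((q : ZMod p)) ∣ 2 := orderOf_dvd_of_pow_eq_one e2
  have : orderOf ((q : ZMod p)) ∣ Nat.gcd 2 d := Nat.dvd_gcd hdvd2 hdvd1
  rw [Nat.coprime_two_left.mpr hd] at this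
  have hord : orderOf ((q : ZMod p)) = 1 := Nat.dvd_one.mp this
  have : ((q : ZMod p)) = 1 := orderOf_eq_one_iff.mp hord
  have : ((q : ℕ) : ZMod p) = ((1 : ℕ) : ZMod p) := by push_cast; exact this
  exact (Nat.modEq_iff_dvd' hq).mp ((ZMod.natCast_eq_natCast_iff _ _ _).mp this).symm

lemma aux_mem_range_of_pow_card {F E : Type*} [Field F] [Fintype F] [Field E] [Fintype E]
    [Algebra F E] {x : E} (hx : x ^ Fintype.card F = x) :
    ∃ a : F, algebraMap F E a = x := by
  classical
  set q := Fintype.card F with hq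
  have hq1 : 1 < q := Fintype.one_lt_card
  set P : E[X] := X ^ q - X with hP
  have hP0 : P ≠ 0 := FiniteField.X_pow_card_sub_X_ne_zero E hq1
  have hPdeg : P.natDegree = q := FiniteField.X_pow_card_sub_X_natDegree_eq E hq1
  set T : Finset E := Finset.univ.image (algebraMap F E) with hT
  have hTsub : T ⊆ P.roots.toFinset := by
    intro t ht
    rw [hT, Finset.mem_image] at ht
    obtain ⟨a, -, rfl⟩ := ht
    rw [Multiset.mem_toFinset, mem_roots hP0]
    simp only [IsRoot.def, hP, eval_sub, eval_pow, eval_X]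
    rw [← map_pow, FiniteField.pow_card, sub_self]
  have hTcard : T.card = q := by
    rw [hT, Finset.card_image_of_injective _ (algebraMap F E).injective, Finset.card_univ]
  have hroots_card : P.roots.toFinset.card ≤ q := by
    calc P.roots.toFinset.card ≤ Multiset.card P.roots := Multiset.toFinset_card_le _
      _ ≤ P.natDegree := Polynomial.card_roots' P
      _ = q := hPdeg
  have hEq : T = P.roots.toFinset :=
    Finset.eq_of_subset_of_card_le hTsub (by omega)
  have hxmem : x ∈ P.roots.toFinset := by
    rw [Multiset.mem_toFinset, mem_roots hP0]
    simp [hP, hx]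
  rw [← hEq, hT, Finset.mem_image] at hxmem
  obtain ⟨a, -, ha⟩ := hxmem
  exact ⟨a, ha⟩

lemma aux_pow_cycle {M : Type*} [Monoid M] {ζ : M} {s N : ℕ} (hN : 1 ≤ N)
    (h : orderOf ζ ∣ s * (N - 1)) : (ζ ^ s) ^ N = ζ ^ s := by
  have hone : ζ ^ (s * (N - 1)) = 1 := orderOf_dvd_iff_pow_eq_one.mp h
  have h1 : s * N = s * (N - 1) + s := by
    have hN' : N - 1 + 1 = N := by omega
    rw [← Nat.mul_succ, Nat.succ_eq_add_one, hN']
  rw [← pow_mul, h1, pow_add, hone, one_mul]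

theorem X_pow_sub_one_three_sparse_sufficiency (F : Type*) [Field F] [Fintype F]
    (r : ℕ) (hr : r.Prime) (hrodd : r ≠ 2) (hchar : ringChar F = r)
    (n : ℕ) (hn : 0 < n) (hcop : ¬ r ∣ n)
    (hdiv : ∀ p : ℕ, p.Prime → p ∣ n → p ∣ Fintype.card F ^ 2 - 1) :
    ∀ g : F[X], g.Monic → Irreducible g → g ∣ (X ^ n - 1 : F[X]) →
      (∃ (m : ℕ) (a : F), a ≠ 0 ∧ g = X ^ m - C a) ∨
      (∃ (m k : ℕ) (a b : F), a ≠ 0 ∧ b ≠ 0 ∧ 0 < k ∧ k < m ∧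
        g = X ^ m + C a * X ^ k + C b) := by
  intro g hmonic hirr hgdvd
  classical
  haveI hFact := Fact.mk hirr
  haveI := Fact.mk hr
  haveI : CharP F r := by rw [← hchar]; exact ringChar.charP F
  set q := Fintype.card F with hqdef
  obtain ⟨kk, -, hk2⟩ := FiniteField.card F r
  have hqodd : Odd q := by rw [hqdef, hk2]; exact (hr.odd_of_ne_two hrodd).pow
  have hq2 : 1 < q := Fintype.one_lt_card
  set d := g.natDegree with hddef
  have hd_pos : 0 < d := hirr.natDegree_pos
  haveI : Fintype (AdjoinRoot g) := Module.fintypeOfFintype (AdjoinRoot.powerBasisAux' hmonic)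
  have hcardE : Fintype.card (AdjoinRoot g) = q ^ d := by
    rw [Module.card_fintype (AdjoinRoot.powerBasisAux' hmonic), Fintype.card_fin]
  set ζ : AdjoinRoot g := AdjoinRoot.root g with hζdef
  have hming : minpoly F ζ = g := by
    rw [hζdef, AdjoinRoot.minpoly_root hmonic.ne_zero, hmonic.leadingCoeff, inv_one, map_one,
      mul_one]
  have haevalg : aeval ζ g = 0 := by have h := minpoly.aeval F ζ; rwa [hming] at h
  have hζn : ζ ^ n = 1 := by
    obtain ⟨t, ht⟩ := hgdvd
    have h := congrArg (aeval ζ) ht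
    simp only [map_sub, map_pow, aeval_X, map_one, map_mul, haevalg, zero_mul] at h
    exact sub_eq_zero.mp h
  have hζ0 : ζ ≠ 0 := by
    intro h
    rw [h, zero_pow hn.ne'] at hζn
    exact zero_ne_one hζn
  set e := orderOf ζ with hedef
  have he_pos : 0 < e := (isOfFinOrder_iff_pow_eq_one.mpr ⟨n, hn, hζn⟩).orderOf_pos
  have hen : e ∣ n := orderOf_dvd_of_pow_eq_one hζn
  have heE : e ∣ q ^ d - 1 := by
    apply orderOf_dvd_of_pow_eq_one
    have h := FiniteField.pow_card_sub_one_eq_one ζ hζ0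
    rwa [hcardE] at h
  have hminc : ∀ P : F[X], P.Monic → P.natDegree = d → aeval ζ P = 0 → g = P := by
    intro P hPm hPd hP0
    have hgP : g ∣ P := hming ▸ minpoly.dvd F ζ hP0
    exact Polynomial.eq_of_dvd_of_natDegree_le_of_leadingCoeff hgP (by rw [hPd])
      (by rw [hmonic.leadingCoeff, hPm.leadingCoeff])
  rcases Nat.even_or_odd d with hdeven | hdodd
  · -- d even : possibly trinomial
    obtain ⟨m, hm⟩ := hdeven
    have hm_pos : 0 < m := by omega
    have hmd : m < d := by omega
    have heQ : e ∣ (q ^ 2) ^ m - 1 := by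
      rw [← pow_mul, show 2 * m = d by omega]; exact heE
    have hprimesQ : ∀ p : ℕ, p.Prime → p ∣ e → p ∣ q ^ 2 - 1 := fun p hp hpe =>
      hdiv p hp (hpe.trans hen)
    have h4 : 4 ∣ q ^ 2 - 1 := by
      obtain ⟨t, ht⟩ := hqodd
      have hq : q ^ 2 = 4 * (t * t + t) + 1 := by rw [ht]; ring
      omega
    have hQ2 : 2 ≤ q ^ 2 := by nlinarith
    have hkey : e ∣ m * (q ^ 2 - 1) :=
      aux_key_dvd he_pos hqodd.pow hQ2 hm_pos heQ hprimesQ (Or.inl h4)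
    set α := ζ ^ m with hαdef
    have hα0 : α ≠ 0 := pow_ne_zero _ hζ0
    have hαQ : α ^ q ^ 2 = α := aux_pow_cycle (by omega) hkey
    haveI : CharP (AdjoinRoot g) r :=
      charP_of_injective_algebraMap (algebraMap F (AdjoinRoot g)).injective r
    have hαqq : (α ^ q) ^ q = α := by
      rw [← pow_mul, ← pow_two]; exact hαQ
    have hcq : (α + α ^ q) ^ q = α + α ^ q := by
      have hfrob : (α + α ^ q) ^ q = α ^ q + (α ^ q) ^ q := by
        have hqrk : q = r ^ (kk : ℕ) := by rw [hqdef, hk2]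
        rw [hqrk]; exact add_pow_char_pow α (α ^ r ^ (kk : ℕ)) r (kk : ℕ)
      rw [hfrob, hαqq, add_comm]
    have hbq : (α * α ^ q) ^ q = α * α ^ q := by
      rw [mul_pow, hαqq, mul_comm]
    obtain ⟨a', ha'⟩ := aux_mem_range_of_pow_card (F := F) hcq
    obtain ⟨b', hb'⟩ := aux_mem_range_of_pow_card (F := F) hbq
    have hb'0 : b' ≠ 0 := by
      intro h; rw [h, map_zero] at hb'
      exact (mul_ne_zero hα0 (pow_ne_zero _ hα0)) hb'.symm
    set P : F[X] := X ^ d + C (-a') * X ^ m + C b' with hPdef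
    have hPalt : P = X ^ d + (C (-a') * X ^ m + C b') := by rw [hPdef, add_assoc]
    have htail : (C (-a') * X ^ m + C b' : F[X]).degree < (d : ℕ) := by
      apply lt_of_le_of_lt (degree_add_le _ _)
      rw [max_lt_iff]
      constructor
      · exact lt_of_le_of_lt (degree_C_mul_X_pow_le _ _) (by exact_mod_cast hmd)
      · exact lt_of_le_of_lt degree_C_le (by exact_mod_cast hd_pos)
    have hPmonic : P.Monic := by rw [hPalt]; exact monic_X_pow_add htail
    have hPdeg : P.natDegree = d := by
      apply natDegree_eq_of_degree_eq_some
      rw [hPalt, degree_add_eq_left_of_degree_lt (by rwa [degree_X_pow]), degree_X_pow]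
    have hProot : aeval ζ P = 0 := by
      have hζd : ζ ^ d = α * α := by rw [hαdef, ← pow_add, ← hm]
      simp only [hPdef, map_add, map_mul, map_pow, aeval_X, aeval_C, map_neg]
      rw [ha', hb', hζd, ← hαdef]
      ring
    have hgP : g = P := hminc P hPmonic hPdeg hProot
    rcases eq_or_ne a' 0 with rfl | ha'0
    · refine Or.inl ⟨d, -b', neg_ne_zero.mpr hb'0, ?_⟩
      rw [hgP, hPdef]
      simp [sub_neg_eq_add]
    · exact Or.inr ⟨d, m, -a', b', neg_ne_zero.mpr ha'0, hb'0, hm_pos, hmd, by rw [hgP, hPdef]⟩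
  · -- d odd : binomial
    have hprimes : ∀ p : ℕ, p.Prime → p ∣ e → p ∣ q - 1 := by
      intro p hp hpe
      exact aux_prime_dvd_sub_one hp (by omega) hdodd (hpe.trans heE)
        (hdiv p hp (hpe.trans hen))
    have hkey : e ∣ d * (q - 1) :=
      aux_key_dvd he_pos hqodd (by omega) hd_pos heE hprimes (Or.inr hdodd)
    have haq : (ζ ^ d) ^ q = ζ ^ d := aux_pow_cycle (by omega) hkey
    obtain ⟨a', ha'⟩ := aux_mem_range_of_pow_card (F := F) haq
    have ha'0 : a' ≠ 0 := by
      intro h; rw [h, map_zero] at ha'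
      exact (pow_ne_zero d hζ0) ha'.symm
    refine Or.inl ⟨d, a', ha'0, ?_⟩
    apply hminc
    · exact monic_X_pow_sub_C a' hd_pos.ne'
    · exact natDegree_X_pow_sub_C
    · simp only [map_sub, map_pow, aeval_X, aeval_C]
      rw [ha', sub_self]
end

section
/- Let q be a power of an odd prime r, and let n be a positive integer coprime to r. If every irreducible factor of X^n - 1 in F_q[X] has at most 3 nonzero terms, then every prime divisor of n divides q² - 1. -/
/-!
The case `p = 2` holds because `q` is odd. For an odd prime `p ∣ n`, take a primitive `p`-th root
of unity `α` over `𝔽_q`. Its minimal polynomial `f` has degree `t < p` and divides `X ^ n - 1`, so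
unless `t ≤ 2` (and then `α ∈ 𝔽_{q²}`) it has the shape `X ^ t + a X ^ e + b` with `0 < e < t`.
If `a = 0` then `α ^ t ∈ 𝔽_q`, and if `t = 2e` then `α ^ e` is a root of `X ^ 2 + a X + b`; either
way some primitive `p`-th root of unity lies in `𝔽_{q²}`, whence `p ∣ q ^ 2 - 1`. In the remaining
case, `α ^ 2` generates the same field as `α` (`p` is odd) and `-α` is not a conjugate of `α` (the
characteristic is odd), so the minimal polynomial `g` of `α ^ 2` satisfies
`g(X²) = ± f(X) f(-X)`. But `f(X) f(-X)` has at least four terms, hence so does `g`, although `g` is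
an irreducible factor of `X ^ n - 1`.
-/

open Polynomial
open scoped IntermediateField

namespace Polynomial

variable {R : Type*}

theorem card_support_expand_le [CommSemiring R] {p : ℕ} (hp : 0 < p) (f : R[X]) :
    (expand R p f).support.card ≤ f.support.card := by
  refine Finset.card_le_card_of_injOn (· / p) (fun k hk => ?_) (fun k hk l hl hkl => ?_)
  · simp only [Finset.mem_coe, mem_support_iff, coeff_expand hp] at hk ⊢
    split_ifs at hk
    · exact hk
    · exact absurd rfl hk
  · simp only [Finset.mem_coe, mem_support_iff, coeff_expand hp] at hk hl
    split_ifs at hk hl with hpk hpl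
    · exact (Nat.div_left_inj hpk hpl).mp hkl
    all_goals contradiction

theorem Monic.eq_X_pow_add_C_mul_X_pow_add_C [Semiring R] {f : R[X]} (hf : f.Monic) {e : ℕ}
    (he : 0 < e) (het : e < f.natDegree) (hsupp : f.support ⊆ {0, e, f.natDegree}) :
    f = X ^ f.natDegree + C (f.coeff e) * X ^ e + C (f.coeff 0) := by
  ext k
  simp only [coeff_add, coeff_X_pow, coeff_C_mul_X_pow, coeff_C]
  by_cases hk : k = 0 ∨ k = e ∨ k = f.natDegree
  · obtain rfl | rfl | rfl := hk
    · simp [he.ne, (he.trans het).ne]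
    · simp [he.ne', het.ne]
    · simp [hf.coeff_natDegree, het.ne', (he.trans het).ne']
  · have hk' : k ∉ f.support := fun h => hk (by simpa using hsupp h)
    push Not at hk
    simp [notMem_support_iff.mp hk', hk.1, hk.2.1, hk.2.2]

theorem exists_support_subset_of_card_support_le_three [Semiring R] {f : R[X]}
    (hf : f.support.card ≤ 3) (h0 : f.coeff 0 ≠ 0) (hd : 2 ≤ f.natDegree) :
    ∃ e, 0 < e ∧ e < f.natDegree ∧ f.support ⊆ {0, e, f.natDegree} := by
  set s := f.support \ {0, f.natDegree}
  have hends : {0, f.natDegree} ⊆ f.support := by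
    rw [Finset.insert_subset_iff, Finset.singleton_subset_iff]
    exact ⟨mem_support_iff.mpr h0, natDegree_mem_support_of_nonzero (by rintro rfl; simp at h0)⟩
  have hs : s.card ≤ 1 := by
    rw [Finset.card_sdiff_of_subset hends, Finset.card_pair (by omega)]
    omega
  have hsupp : ∀ k ∈ f.support, k = 0 ∨ k = f.natDegree ∨ k ∈ s := by
    intro k hk
    by_cases hk' : k = 0 ∨ k = f.natDegree
    · tauto
    · exact Or.inr (Or.inr (Finset.mem_sdiff.mpr ⟨hk, by simpa using hk'⟩))
  obtain hs0 | ⟨e, he⟩ := s.eq_empty_or_nonempty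
  · refine ⟨1, one_pos, hd, fun k hk => ?_⟩
    rcases hsupp k hk with rfl | rfl | hks
    · simp
    · simp
    · simp [hs0] at hks
  · obtain ⟨hef, hne⟩ := Finset.mem_sdiff.mp he
    simp only [Finset.mem_insert, Finset.mem_singleton, not_or] at hne
    refine ⟨e, Nat.pos_of_ne_zero hne.1, lt_of_le_of_ne (le_natDegree_of_mem_supp e hef) hne.2,
      fun k hk => ?_⟩
    rcases hsupp k hk with rfl | rfl | hks
    · simp
    · simp
    · simp [Finset.card_le_one.mp hs k hks e he]

theorem four_le_card_support_mul_comp_neg_X [CommRing R] [IsDomain R] (h2 : (2 : R) ≠ 0)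
    {a b : R} (ha : a ≠ 0) (hb : b ≠ 0) {e t : ℕ} (he : 0 < e) (het : e < t) (ht : t ≠ 2 * e) :
    4 ≤ ((X ^ t + C a * X ^ e + C b) * (X ^ t + C a * X ^ e + C b).comp (-X)).support.card := by
  set P := (X ^ t + C a * X ^ e + C b) * (X ^ t + C a * X ^ e + C b).comp (-X)
  have hP : P = C ((-1) ^ t) * X ^ (2 * t) + C (a * ((-1) ^ t + (-1) ^ e)) * X ^ (t + e)
      + C (b * (1 + (-1) ^ t)) * X ^ t + C ((-1) ^ e * a ^ 2) * X ^ (2 * e)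
      + C (a * b * (1 + (-1) ^ e)) * X ^ e + C (b ^ 2) := by
    simp only [P, add_comp, mul_comp, pow_comp, X_comp, C_comp, neg_pow (X : R[X]), map_add,
      map_mul, map_pow, map_neg, map_one]
    ring
  have hcoeff (k : ℕ) : P.coeff k = (if k = 2 * t then (-1) ^ t else 0)
      + (if k = t + e then a * ((-1) ^ t + (-1) ^ e) else 0)
      + (if k = t then b * (1 + (-1) ^ t) else 0) + (if k = 2 * e then (-1) ^ e * a ^ 2 else 0)
      + (if k = e then a * b * (1 + (-1) ^ e) else 0) + (if k = 0 then b ^ 2 else 0) := by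
    simp only [hP, coeff_add, coeff_C_mul_X_pow, coeff_C]
  have hsub {k : ℕ} (hk : k ∈ P.support) : {0, 2 * e, 2 * t, k} ⊆ P.support := by
    simp only [Finset.insert_subset_iff, Finset.singleton_subset_iff]
    refine ⟨?_, ?_, ?_, hk⟩ <;> simp (disch := omega) only [mem_support_iff, hcoeff, if_neg]
      <;> simp [ha, hb]
  have four_le {k : ℕ} (hk : k ∈ P.support) (hk0 : k ≠ 0) (hke : k ≠ 2 * e) (hkt : k ≠ 2 * t) :
      4 ≤ P.support.card := by
    calc 4 = ({0, 2 * e, 2 * t, k} : Finset ℕ).card := by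
          rw [Finset.card_insert_of_notMem (by simp; omega), Finset.card_insert_of_notMem
            (by simp; omega), Finset.card_pair (by omega)]
      _ ≤ P.support.card := Finset.card_le_card (hsub hk)
  -- the coefficients `b (1 + (-1) ^ t)`, `a b (1 + (-1) ^ e)`, `a ((-1) ^ t + (-1) ^ e)` of
  -- `X ^ t`, `X ^ e`, `X ^ (t + e)` cannot all vanish
  by_cases hodd_t : 1 + (-1 : R) ^ t = 0
  · by_cases hodd_e : 1 + (-1 : R) ^ e = 0
    · refine four_le (k := t + e) ?_ (by omega) (by omega) (by omega)
      simp (disch := omega) only [mem_support_iff, hcoeff, if_neg]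
      have : (-1 : R) ^ t + (-1) ^ e = -2 := by linear_combination hodd_t + hodd_e
      simpa [this] using ⟨ha, h2⟩
    · refine four_le (k := e) ?_ (by omega) (by omega) (by omega)
      simp (disch := omega) only [mem_support_iff, hcoeff, if_neg]
      simpa using ⟨⟨ha, hb⟩, hodd_e⟩
  · refine four_le (k := t) ?_ (by omega) ht (by omega)
    simp (disch := omega) only [mem_support_iff, hcoeff, if_neg]
    simpa using ⟨hb, hodd_t⟩

end Polynomial

section

variable {K L : Type*} [Field K] [Field L] [Algebra K L]

theorem natDegree_minpoly_eq_of_mem_adjoin_simple {x y : L} (hx : IsIntegral K x)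
    (hy : IsIntegral K y) (hxy : x ∈ K⟮y⟯) (hyx : y ∈ K⟮x⟯) :
    (minpoly K x).natDegree = (minpoly K y).natDegree := by
  have h : K⟮x⟯ = K⟮y⟯ := le_antisymm (IntermediateField.adjoin_simple_le_iff.mpr hxy)
    (IntermediateField.adjoin_simple_le_iff.mpr hyx)
  rw [← IntermediateField.adjoin.finrank hx, ← IntermediateField.adjoin.finrank hy, h]

theorem expand_two_minpoly_sq {α : L} (hint : IsIntegral K α) (hsq : α ∈ K⟮α ^ 2⟯)
    (hneg : aeval (-α) (minpoly K α) ≠ 0) :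
    expand K 2 (minpoly K (α ^ 2)) = minpoly K α * minpoly K (-α) := by
  have hgen (x : L) : x ∈ K⟮x⟯ := IntermediateField.mem_adjoin_simple_self K x
  have hcop : IsCoprime (minpoly K α) (minpoly K (-α)) :=
    ((minpoly.irreducible hint.neg).coprime_iff_not_dvd.mpr (mt minpoly.dvd_iff.mp hneg)).symm
  refine eq_of_monic_of_dvd_of_natDegree_le ((minpoly.monic hint).mul (minpoly.monic hint.neg))
    ((monic_expand_iff two_pos).mpr (minpoly.monic (hint.pow 2))) ?_ ?_
  · refine hcop.mul_dvd (minpoly.dvd K α ?_) (minpoly.dvd K (-α) ?_)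
    · rw [expand_aeval, minpoly.aeval]
    · rw [expand_aeval, neg_sq, minpoly.aeval]
  · have hneg_mem : α ∈ K⟮-α⟯ := by simpa only [neg_neg] using neg_mem (s := K⟮-α⟯) (hgen (-α))
    rw [natDegree_expand, natDegree_mul (minpoly.ne_zero hint) (minpoly.ne_zero hint.neg),
      natDegree_minpoly_eq_of_mem_adjoin_simple (hint.pow 2) hint
        (pow_mem (S := K⟮α⟯) (hgen α) 2) hsq,
      natDegree_minpoly_eq_of_mem_adjoin_simple hint.neg hint (neg_mem (s := K⟮α⟯) (hgen α))
        hneg_mem]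
    omega

theorem four_le_card_support_minpoly_sq (h2 : (2 : K) ≠ 0) {p : ℕ} (hp : Odd p) {α : L}
    (hα : α ^ p = 1) {a b : K} (ha : a ≠ 0) (hb : b ≠ 0) {e t : ℕ} (he : 0 < e) (het : e < t)
    (ht : t ≠ 2 * e) (hf : minpoly K α = X ^ t + C a * X ^ e + C b) :
    4 ≤ (minpoly K (α ^ 2)).support.card := by
  have hint : IsIntegral K α := .of_pow hp.pos (hα ▸ isIntegral_one)
  have hsq : α ∈ K⟮α ^ 2⟯ := by
    have hα' : (α ^ 2) ^ ((p + 1) / 2) = α := by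
      rw [← pow_mul, Nat.mul_div_cancel' hp.add_one.two_dvd, pow_succ, hα, one_mul]
    have := pow_mem (S := K⟮α ^ 2⟯) (IntermediateField.mem_adjoin_simple_self K (α ^ 2))
      ((p + 1) / 2)
    rwa [hα'] at this
  -- `-α` is not a `p`-th root of unity, as `p` is odd and `2 ≠ 0`
  have hneg : aeval (-α) (minpoly K α) ≠ 0 := by
    intro hroot
    have := aeval_eq_zero_of_dvd_aeval_eq_zero (minpoly.dvd K α (p := X ^ p - 1) (by simp [hα]))
      hroot
    simp only [map_sub, map_pow, aeval_X, map_one, hp.neg_pow, hα] at this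
    refine h2 ?_
    rw [← map_eq_zero_iff (algebraMap K L) (algebraMap K L).injective, map_ofNat]
    linear_combination -this
  calc 4 ≤ (minpoly K α * (minpoly K α).comp (-X)).support.card :=
        hf ▸ four_le_card_support_mul_comp_neg_X h2 ha hb he het ht
    _ = (minpoly K α * minpoly K (-α)).support.card := by
      rw [minpoly.neg, mul_left_comm]
      rcases neg_one_pow_eq_or K[X] (minpoly K α).natDegree with h | h <;> simp [h]
    _ = (expand K 2 (minpoly K (α ^ 2))).support.card := by rw [expand_two_minpoly_sq hint hsq hneg]
    _ ≤ (minpoly K (α ^ 2)).support.card := card_support_expand_le two_pos _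

variable [Fintype K]

theorem IsPrimitiveRoot.dvd_card_pow_natDegree_minpoly_sub_one {β : L} {p : ℕ}
    (hβ : IsPrimitiveRoot β p) (hp : p ≠ 0) (hint : IsIntegral K β) :
    p ∣ Fintype.card K ^ (minpoly K β).natDegree - 1 := by
  have := IntermediateField.adjoin.finiteDimensional hint
  have : Finite K⟮β⟯ := Module.finite_of_finite K
  have : Fintype K⟮β⟯ := Fintype.ofFinite _
  have hcard : Fintype.card K⟮β⟯ = Fintype.card K ^ (minpoly K β).natDegree := by
    rw [Module.card_eq_pow_finrank (K := K), IntermediateField.adjoin.finrank hint]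
  have hgen : IntermediateField.AdjoinSimple.gen K β ≠ 0 := by
    simpa [← Subtype.coe_ne_coe] using hβ.ne_zero hp
  refine hβ.dvd_of_pow_eq_one _ ?_
  simpa [hcard] using congrArg (algebraMap K⟮β⟯ L) (FiniteField.pow_card_sub_one_eq_one _ hgen)

theorem IsPrimitiveRoot.dvd_card_sq_sub_one {β : L} {p : ℕ} (hβ : IsPrimitiveRoot β p)
    (hp : p ≠ 0) {g : K[X]} (hg : g.Monic) (hgd : g.natDegree ≤ 2) (hgβ : aeval β g = 0) :
    p ∣ Fintype.card K ^ 2 - 1 := by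
  have hint : IsIntegral K β := ⟨g, hg, hgβ⟩
  have hd_dvd : (minpoly K β).natDegree ∣ 2 := by
    have := (natDegree_le_natDegree (minpoly.min K β hg hgβ)).trans hgd
    have := minpoly.natDegree_pos hint
    interval_cases (minpoly K β).natDegree <;> norm_num
  exact (hβ.dvd_card_pow_natDegree_minpoly_sub_one hp hint).trans
    (Nat.pow_sub_one_dvd_pow_sub_one _ hd_dvd)

theorem IsPrimitiveRoot.dvd_card_sq_sub_one_of_minpoly_eq {α : L} {p : ℕ}
    (hα : IsPrimitiveRoot α p) (hp : p.Prime) (hodd : Odd p) (h2 : (2 : K) ≠ 0)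
    (hsparse : (minpoly K (α ^ 2)).support.card ≤ 3) {a b : K} (hb : b ≠ 0) {e t : ℕ}
    (he : 0 < e) (het : e < t) (htp : t < p) (hf : minpoly K α = X ^ t + C a * X ^ e + C b) :
    p ∣ Fintype.card K ^ 2 - 1 := by
  have hroot : α ^ t + algebraMap K L a * α ^ e + algebraMap K L b = 0 := by
    simpa [hf] using minpoly.aeval K α
  have hprim {m : ℕ} (hm : 0 < m) (hmp : m < p) : IsPrimitiveRoot (α ^ m) p :=
    hα.pow_of_coprime m (Nat.coprime_of_lt_prime hm.ne' hmp hp).symm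
  by_cases ha : a = 0
  · refine (hprim (he.trans het) htp).dvd_card_sq_sub_one hp.ne_zero (monic_X_add_C b)
      (by rw [natDegree_X_add_C]; norm_num) ?_
    simp only [ha, map_zero, zero_mul, add_zero] at hroot
    simpa using hroot
  by_cases hte : t = 2 * e
  · refine (hprim he (by omega)).dvd_card_sq_sub_one hp.ne_zero (g := C 1 * X ^ 2 + C a * X + C b)
      (leadingCoeff_quadratic one_ne_zero) natDegree_quadratic_le ?_
    simp only [map_add, map_mul, map_pow, aeval_X, aeval_C, map_one, one_mul, ← pow_mul]
    rwa [mul_comm, ← hte]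
  · exact absurd hsparse (not_le.mpr
      (four_le_card_support_minpoly_sq h2 hodd hα.pow_eq_one ha hb he het hte hf))

theorem dvd_card_sq_sub_one_of_card_support_le_three (h2 : (2 : K) ≠ 0) {p : ℕ} (hp : p.Prime)
    (hodd : Odd p) (hpK : (p : K) ≠ 0)
    (hsparse : ∀ g : K[X], Irreducible g → g ∣ X ^ p - 1 → g.support.card ≤ 3) :
    p ∣ Fintype.card K ^ 2 - 1 := by
  have : NeZero (p : K) := ⟨hpK⟩
  obtain ⟨α, hα⟩ := HasEnoughRootsOfUnity.exists_primitiveRoot (AlgebraicClosure K) p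
  have hsparse_minpoly {β : AlgebraicClosure K} (hβ : β ^ p = 1) : (minpoly K β).support.card ≤ 3 :=
    hsparse _ (minpoly.irreducible (.of_pow hp.pos (hβ ▸ isIntegral_one)))
      (minpoly.dvd K β (by simp [hβ]))
  have hint : IsIntegral K α := .of_pow hp.pos (hα.pow_eq_one ▸ isIntegral_one)
  have hb := minpoly.coeff_zero_ne_zero hint (hα.ne_zero hp.ne_zero)
  have htp : (minpoly K α).natDegree < p := by
    have hcyc : aeval α (cyclotomic p K) = 0 := by
      rw [aeval_def, eval₂_eq_eval_map, map_cyclotomic]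
      exact hα.isRoot_cyclotomic hp.pos
    have := natDegree_le_of_dvd (minpoly.dvd K α hcyc) (cyclotomic_ne_zero p K)
    rw [natDegree_cyclotomic, Nat.totient_prime hp] at this
    have := hp.pos
    omega
  by_cases ht : (minpoly K α).natDegree ≤ 2
  · exact hα.dvd_card_sq_sub_one hp.ne_zero (minpoly.monic hint) ht (minpoly.aeval K α)
  obtain ⟨e, he, het, hsupp⟩ :=
    exists_support_subset_of_card_support_le_three (hsparse_minpoly hα.pow_eq_one) hb (by omega)
  exact hα.dvd_card_sq_sub_one_of_minpoly_eq hp hodd h2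
    (hsparse_minpoly (by rw [← pow_mul, mul_comm, pow_mul, hα.pow_eq_one, one_pow])) hb he het htp
    ((minpoly.monic hint).eq_X_pow_add_C_mul_X_pow_add_C he het hsupp)

end

theorem X_pow_sub_one_three_sparse_necessity_general (F : Type*) [Field F] [Fintype F]
    (r : ℕ) (hrodd : r ≠ 2) (hchar : ringChar F = r)
    (n : ℕ) (hcop : ¬ r ∣ n)
    (hsparse : ∀ g : F[X], Irreducible g → g ∣ (X ^ n - 1 : F[X]) → g.support.card ≤ 3) :
    ∀ p : ℕ, p.Prime → p ∣ n → p ∣ Fintype.card F ^ 2 - 1 := by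
  intro p hp hpn
  have hF2 : ringChar F ≠ 2 := hchar ▸ hrodd
  rcases hp.eq_two_or_odd' with rfl | hodd
  · have hq : Odd (Fintype.card F) := Nat.odd_iff.mpr (FiniteField.odd_card_of_char_ne_two hF2)
    exact (Nat.Odd.sub_odd hq.pow odd_one).two_dvd
  have hpF : (p : F) ≠ 0 := by
    rw [Ne, ringChar.spec]
    intro h
    rcases (Nat.dvd_prime hp).mp h with h | h
    · exact CharP.ringChar_ne_one h
    · exact hcop (hchar ▸ h ▸ hpn)
  have hdvd : (X ^ p - 1 : F[X]) ∣ X ^ n - 1 := by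
    obtain ⟨c, rfl⟩ := hpn
    simpa [pow_mul] using sub_one_dvd_pow_sub_one ((X : F[X]) ^ p) c
  exact dvd_card_sq_sub_one_of_card_support_le_three (Ring.two_ne_zero hF2) hp hodd hpF
    fun g hg hgd => hsparse g hg (hgd.trans hdvd)

theorem X_pow_sub_one_three_sparse_necessity (F : Type*) [Field F] [Fintype F]
    (r : ℕ) (hr : r.Prime) (hrodd : r ≠ 2) (hchar : ringChar F = r)
    (n : ℕ) (hn : 0 < n) (hcop : ¬ r ∣ n)
    (hsparse : ∀ g : F[X], Irreducible g → g ∣ (X ^ n - 1 : F[X]) → g.support.card ≤ 3) :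
    ∀ p : ℕ, p.Prime → p ∣ n → p ∣ Fintype.card F ^ 2 - 1 :=
  X_pow_sub_one_three_sparse_necessity_general F r hrodd hchar n hcop hsparse
end

section
/- For every integer k ≥ 3, the polynomial X^(2^k) − 1 over F_3 factors into irreducibles as (X − 1)(X + 1)(X² + 1) · ∏_{i=3}^{k} ∏_{u ∈ {1,2}} (X^(2^(i-2)) + u·X^(2^(i-3)) + 2). -/
/-!
In characteristic 3, `(Y² + Y + 2)(Y² + 2Y + 2) = Y⁴ + 1`, so the two factors of index `i` multiply
to `X^(2^(i-1)) + 1 = Φ_{2^i}`, and `X^(2^k) - 1` telescopes into `(X - 1) ∏ (X^(2^j) + 1)`.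
Over `𝔽₃` every irreducible factor of `Φ_{2^i}` has degree the order of `3` modulo `2^i`, which by
lifting the exponent is `2^(i-2)`: exactly the degree of each factor, which is thus irreducible.
-/

open Polynomial

theorem cyclotomic_two_pow_succ (R : Type*) [CommRing R] (n : ℕ) :
    cyclotomic (2 ^ (n + 1)) R = X ^ 2 ^ n + 1 := by
  rw [cyclotomic_prime_pow_eq_geom_sum Nat.prime_two]
  simp [Finset.sum_range_succ, add_comm]

theorem ZMod.natCast_pow_eq_one_iff_dvd {m a e : ℕ} (ha : 0 < a) :
    (a : ZMod m) ^ e = 1 ↔ m ∣ a ^ e - 1 := by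
  rw [← Nat.cast_pow, ← Nat.cast_one, ZMod.natCast_eq_natCast_iff, Nat.ModEq.comm,
    Nat.modEq_iff_dvd' (Nat.one_le_pow _ _ ha)]

theorem padicValNat_three_pow_two_pow_sub_one (t : ℕ) :
    padicValNat 2 (3 ^ 2 ^ (t + 1) - 1) = t + 3 := by
  have h := padicValNat.pow_two_sub_one (x := 3) (n := 2 ^ (t + 1)) (by norm_num) (by norm_num)
    (by positivity) ((Nat.even_pow' (by omega)).mpr even_two)
  rw [show 3 + 1 = 2 ^ 2 by rfl, padicValNat.prime_pow, padicValNat.prime_pow] at h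
  norm_num at h
  omega

theorem orderOf_three_zmod_two_pow (t : ℕ) : orderOf (3 : ZMod (2 ^ (t + 3))) = 2 ^ (t + 1) := by
  have hpos (n : ℕ) : 3 ^ 2 ^ n - 1 ≠ 0 :=
    Nat.sub_ne_zero_of_lt (Nat.one_lt_pow (by positivity) (by norm_num))
  rw [show (3 : ZMod (2 ^ (t + 3))) = ((3 : ℕ) : ZMod (2 ^ (t + 3))) by norm_cast]
  apply orderOf_eq_prime_pow
  · rw [ZMod.natCast_pow_eq_one_iff_dvd (by norm_num)]
    cases t with
    | zero => norm_num
    | succ s =>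
      rw [padicValNat_dvd_iff_le (hpos _), padicValNat_three_pow_two_pow_sub_one]
      omega
  · rw [ZMod.natCast_pow_eq_one_iff_dvd (by norm_num), padicValNat_dvd_iff_le (hpos _),
      padicValNat_three_pow_two_pow_sub_one]

theorem mul_eq_pow_four_add_one_of_charP_three {R : Type*} [CommRing R] [CharP R 3] (y : R) :
    (y ^ 2 + y + 2) * (y ^ 2 + 2 * y + 2) = y ^ 4 + 1 := by
  linear_combination (y ^ 3 + 2 * y ^ 2 + 2 * y + 1) * CharP.cast_eq_zero R 3

theorem prod_X_pow_two_pow_add_C_mul_add_two (t : ℕ) :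
    ∏ u ∈ ({1, 2} : Finset (ZMod 3)), (X ^ 2 ^ (t + 1) + C u * X ^ 2 ^ t + 2 : (ZMod 3)[X]) =
      X ^ 2 ^ (t + 2) + 1 := by
  have h2 : (X : (ZMod 3)[X]) ^ 2 ^ (t + 1) = (X ^ 2 ^ t) ^ 2 := by ring
  have h4 : (X : (ZMod 3)[X]) ^ 2 ^ (t + 2) = (X ^ 2 ^ t) ^ 4 := by ring
  rw [Finset.prod_pair (by decide), map_one, map_ofNat, one_mul, h2, h4]
  exact mul_eq_pow_four_add_one_of_charP_three _

theorem natDegree_X_pow_two_pow_add_C_mul_add_two (t : ℕ) (u : ZMod 3) :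
    (X ^ 2 ^ (t + 1) + C u * X ^ 2 ^ t + 2 : (ZMod 3)[X]).natDegree = 2 ^ (t + 1) := by
  compute_degree!
  all_goals exact Nat.pow_le_pow_right two_pos t.le_succ

theorem irreducible_X_pow_two_pow_add_C_mul_add_two (t : ℕ) {u : ZMod 3}
    (hu : u ∈ ({1, 2} : Finset (ZMod 3))) :
    Irreducible (X ^ 2 ^ (t + 1) + C u * X ^ 2 ^ t + 2 : (ZMod 3)[X]) := by
  have h3 : ¬ 3 ∣ 2 ^ (t + 3) :=
    Nat.prime_three.coprime_iff_not_dvd.mp (Nat.Coprime.pow_right _ (by norm_num))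
  refine ZMod.irreducible_of_dvd_cyclotomic_of_natDegree h3 ?_ ?_
  · rw [cyclotomic_two_pow_succ, ← prod_X_pow_two_pow_add_C_mul_add_two]
    exact Finset.dvd_prod_of_mem _ hu
  · rw [← orderOf_units, ZMod.coe_unitOfCoprime, natDegree_X_pow_two_pow_add_C_mul_add_two]
    exact (orderOf_three_zmod_two_pow t).symm

theorem X_pow_two_pow_sub_one_eq_mul_prod {R : Type*} [CommRing R] {k : ℕ} (hk : 3 ≤ k) :
    (X ^ 2 ^ k - 1 : R[X]) =
      (X - 1) * (X + 1) * (X ^ 2 + 1) * ∏ i ∈ Finset.Icc 3 k, (X ^ 2 ^ (i - 1) + 1) := by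
  induction k, hk using Nat.le_induction with
  | base =>
    simp only [Nat.reducePow, Finset.Icc_self, Finset.prod_singleton, Nat.add_one_sub_one]
    ring
  | succ k hk ih =>
    rw [Finset.prod_Icc_succ_top (by omega), ← mul_assoc, ← ih, Nat.add_sub_cancel, pow_succ,
      pow_mul]
    ring

theorem X_pow_two_pow_sub_one_factorization_F3 (k : ℕ) (hk : 3 ≤ k) :
    (X ^ (2 ^ k) - 1 : (ZMod 3)[X]) =
      (X - 1) * (X + 1) * (X ^ 2 + 1) *
        ∏ i ∈ Finset.Icc 3 k, ∏ u ∈ ({1, 2} : Finset (ZMod 3)),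
          (X ^ (2 ^ (i - 2)) + C u * X ^ (2 ^ (i - 3)) + 2) ∧
    ∀ i ∈ Finset.Icc 3 k, ∀ u ∈ ({1, 2} : Finset (ZMod 3)),
      Irreducible (X ^ (2 ^ (i - 2)) + C u * X ^ (2 ^ (i - 3)) + 2 : (ZMod 3)[X]) := by
  have hshift {i : ℕ} (hi : i ∈ Finset.Icc 3 k) : i - 2 = i - 3 + 1 ∧ i - 1 = i - 3 + 2 := by
    have := (Finset.mem_Icc.mp hi).1; omega
  refine ⟨?_, fun i hi u hu => ?_⟩
  · rw [X_pow_two_pow_sub_one_eq_mul_prod hk]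
    congr 1
    refine Finset.prod_congr rfl fun i hi => ?_
    rw [(hshift hi).1, (hshift hi).2, prod_X_pow_two_pow_add_C_mul_add_two]
  · rw [(hshift hi).1]
    exact irreducible_X_pow_two_pow_add_C_mul_add_two _ hu
end

section
/- For every integer i ≥ 3, the trinomial X^(2^(i-2)) + X^(2^(i-3)) + 2 is irreducible over F_3. -/
open Polynomial


open Polynomial

set_option maxHeartbeats 1000000 in
set_option synthInstance.maxHeartbeats 400000 in
lemma key (f : (ZMod 3)[X]) (hm : f.Monic) (hirr : Irreducible f)
    (heven : Even f.natDegree) (hc : f.coeff 0 = 2) :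
    Irreducible (f.comp (X ^ 2)) := by
  haveI : Fact (Irreducible f) := ⟨hirr⟩
  have hf0 : f ≠ 0 := hm.ne_zero
  set α : AdjoinRoot f := AdjoinRoot.root f with hα
  let pb := AdjoinRoot.powerBasis hf0
  have hgen : pb.gen = α := rfl
  have hdim : pb.dim = f.natDegree := rfl
  have hminp : minpoly (ZMod 3) α = f := by
    rw [hα, AdjoinRoot.minpoly_root hf0, hm.leadingCoeff, inv_one, map_one, mul_one]
  have hnorm : Algebra.norm (ZMod 3) α = -1 := by
    have h := Algebra.PowerBasis.norm_gen_eq_coeff_zero_minpoly pb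
    rw [hgen, hdim, hminp, hc, heven.neg_one_pow] at h
    rw [h]; decide
  have hns : ∀ b : AdjoinRoot f, b ^ 2 ≠ α := by
    intro b hb
    have h2 : (Algebra.norm (ZMod 3) b) ^ 2 = -1 := by
      rw [← map_pow, hb, hnorm]
    have : ∀ c : ZMod 3, c ^ 2 ≠ -1 := by decide
    exact this _ h2
  have hirr2 : Irreducible (X ^ 2 - C α : (AdjoinRoot f)[X]) :=
    X_pow_sub_C_irreducible_of_prime Nat.prime_two hns
  haveI : Fact (Irreducible (X ^ 2 - C α : (AdjoinRoot f)[X])) := ⟨hirr2⟩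
  have hq0 : (X ^ 2 - C α : (AdjoinRoot f)[X]) ≠ 0 := hirr2.ne_zero
  set γ : AdjoinRoot (X ^ 2 - C α : (AdjoinRoot f)[X]) :=
    AdjoinRoot.root (X ^ 2 - C α : (AdjoinRoot f)[X]) with hγ
  have hγ2 : γ ^ 2 = algebraMap (AdjoinRoot f) _ α := by
    have h := AdjoinRoot.eval₂_root (X ^ 2 - C α : (AdjoinRoot f)[X])
    simp only [eval₂_sub, eval₂_pow, eval₂_X, eval₂_C, sub_eq_zero] at h
    rw [hγ, h, AdjoinRoot.algebraMap_eq]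
  haveI : Module.Finite (ZMod 3) (AdjoinRoot f) := pb.finite
  let pb2 := AdjoinRoot.powerBasis hq0
  haveI : Module.Finite (AdjoinRoot f) (AdjoinRoot (X ^ 2 - C α : (AdjoinRoot f)[X])) :=
    pb2.finite
  haveI : Module.Finite (ZMod 3) (AdjoinRoot (X ^ 2 - C α : (AdjoinRoot f)[X])) :=
    Module.Finite.trans (AdjoinRoot f) _
  have hint : IsIntegral (ZMod 3) γ := IsIntegral.of_finite _ _
  have hfα : aeval α f = 0 := by
    rw [hα, AdjoinRoot.aeval_eq, AdjoinRoot.mk_self]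
  have hroot : aeval γ (f.comp (X ^ 2)) = 0 := by
    rw [aeval_comp, map_pow, aeval_X, hγ2, aeval_algebraMap_apply, hfα, map_zero]
  have hdvd : minpoly (ZMod 3) γ ∣ f.comp (X ^ 2) := minpoly.dvd _ _ hroot
  have hadj : Algebra.adjoin (ZMod 3) {γ} = ⊤ := by
    set S := Algebra.adjoin (ZMod 3) {γ} with hS
    have hγS : γ ∈ S := Algebra.subset_adjoin rfl
    have hαS : algebraMap (AdjoinRoot f) _ α ∈ S := by rw [← hγ2]; exact pow_mem hγS 2
    have himg : ∀ y : AdjoinRoot f,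
        algebraMap (AdjoinRoot f) (AdjoinRoot (X ^ 2 - C α : (AdjoinRoot f)[X])) y ∈ S := by
      intro y
      have h2 : y ∈ Algebra.adjoin (ZMod 3) ({α} : Set (AdjoinRoot f)) := by
        rw [hα, AdjoinRoot.adjoinRoot_eq_top]; trivial
      induction h2 using Algebra.adjoin_induction with
      | mem x hx => rw [Set.mem_singleton_iff] at hx; rw [hx]; exact hαS
      | algebraMap r =>
          rw [← IsScalarTower.algebraMap_apply]
          exact Subalgebra.algebraMap_mem S r
      | add x y hx hy ihx ihy => rw [map_add]; exact add_mem ihx ihy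
      | mul x y hx hy ihx ihy => rw [map_mul]; exact mul_mem ihx ihy
    rw [eq_top_iff]
    intro x hxtop
    clear hxtop
    have hx : x ∈ Algebra.adjoin (AdjoinRoot f) ({γ} : Set _) := by
      rw [hγ, AdjoinRoot.adjoinRoot_eq_top]; trivial
    induction hx using Algebra.adjoin_induction with
    | mem x hx => rw [Set.mem_singleton_iff] at hx; rw [hx]; exact hγS
    | algebraMap r => exact himg r
    | add x y hx hy ihx ihy => exact add_mem ihx ihy
    | mul x y hx hy ihx ihy => exact mul_mem ihx ihy
  have hrank : Module.finrank (ZMod 3) (AdjoinRoot (X ^ 2 - C α : (AdjoinRoot f)[X]))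
      = f.natDegree * 2 := by
    rw [← Module.finrank_mul_finrank (ZMod 3) (AdjoinRoot f)
      (AdjoinRoot (X ^ 2 - C α : (AdjoinRoot f)[X])), pb.finrank, hdim, pb2.finrank]
    congr 1
    show (X ^ 2 - C α : (AdjoinRoot f)[X]).natDegree = 2
    rw [natDegree_X_pow_sub_C]
  have hdegm : (minpoly (ZMod 3) γ).natDegree = f.natDegree * 2 := by
    have h1 : IntermediateField.adjoin (ZMod 3) ({γ} : Set _) = ⊤ := by
      rw [← IntermediateField.toSubalgebra_injective.eq_iff,
        IntermediateField.top_toSubalgebra]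
      rw [eq_top_iff, ← hadj]
      exact IntermediateField.algebra_adjoin_le_adjoin _ _
    have h2 := IntermediateField.adjoin.finrank hint
    rw [h1, IntermediateField.finrank_top'] at h2
    rw [← h2, hrank]
  have hmg : (f.comp (X ^ 2)).Monic := hm.comp (monic_X_pow 2) (by simp)
  have hdegg : (f.comp (X ^ 2)).natDegree = f.natDegree * 2 := by
    rw [natDegree_comp, natDegree_X_pow]
  have heq : f.comp (X ^ 2) = minpoly (ZMod 3) γ := by
    apply eq_of_monic_of_dvd_of_natDegree_le (minpoly.monic hint) hmg hdvd
    rw [hdegg, hdegm]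
  rw [heq]
  exact minpoly.irreducible hint


lemma tri_monic (m : ℕ) : (X ^ 2 ^ (m + 1) + X ^ 2 ^ m + C 2 : (ZMod 3)[X]).Monic := by
  rw [add_assoc]
  apply monic_X_pow_add
  apply lt_of_le_of_lt (degree_add_le _ _)
  have h1 : (X ^ 2 ^ m : (ZMod 3)[X]).degree = 2 ^ m := degree_X_pow _
  have h2 : 2 ^ m < 2 ^ (m + 1) := by
    exact_mod_cast Nat.pow_lt_pow_succ one_lt_two
  apply max_lt
  · rw [h1]; exact_mod_cast h2
  · apply lt_of_le_of_lt (degree_C_le)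
    exact_mod_cast Nat.pos_of_ne_zero (pow_ne_zero _ two_ne_zero)

lemma tri_natDegree (m : ℕ) :
    (X ^ 2 ^ (m + 1) + X ^ 2 ^ m + C 2 : (ZMod 3)[X]).natDegree = 2 ^ (m + 1) := by
  compute_degree!
  all_goals exact Nat.pow_le_pow_right (by norm_num) (Nat.le_succ m)

lemma tri_coeff0 (m : ℕ) : (X ^ 2 ^ (m + 1) + X ^ 2 ^ m + C 2 : (ZMod 3)[X]).coeff 0 = 2 := by
  simp [coeff_X_pow, (pow_ne_zero _ two_ne_zero : (2:ℕ) ^ (m+1) ≠ 0),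
    (pow_ne_zero _ two_ne_zero : (2:ℕ) ^ m ≠ 0), Ne.symm]

lemma tri_base : Irreducible (X ^ 2 + X + C 2 : (ZMod 3)[X]) := by
  have hm : (X ^ 2 + X + C 2 : (ZMod 3)[X]).Monic := by
    have := tri_monic 0
    simpa using this
  have hdeg : (X ^ 2 + X + C 2 : (ZMod 3)[X]).natDegree = 2 := by
    have := tri_natDegree 0
    simpa using this
  rw [hm.irreducible_iff_roots_eq_zero_of_degree_le_three (by rw [hdeg]) (by rw [hdeg]; norm_num)]
  rw [Multiset.eq_zero_iff_forall_notMem]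
  intro a ha
  rw [mem_roots hm.ne_zero] at ha
  have h2 : a ^ 2 + a + 2 = 0 := by simpa [IsRoot, eval_add, eval_pow] using ha
  clear ha
  revert a h2
  decide

lemma tri_comp (n : ℕ) :
    (X ^ 2 ^ (n + 2) + X ^ 2 ^ (n + 1) + C 2 : (ZMod 3)[X])
      = (X ^ 2 ^ (n + 1) + X ^ 2 ^ n + C 2 : (ZMod 3)[X]).comp (X ^ 2) := by
  have e1 : (2:ℕ) ^ (n + 2) = 2 * 2 ^ (n + 1) := by ring
  have e2 : (2:ℕ) ^ (n + 1) = 2 * 2 ^ n := by ring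
  simp only [add_comp, X_pow_comp, C_comp]
  rw [← pow_mul, ← pow_mul, ← e1, ← e2]

lemma C2_eq : (C 2 : (ZMod 3)[X]) = 2 :=
  map_ofNat C 2

lemma tri_irr (m : ℕ) : Irreducible (X ^ 2 ^ (m + 1) + X ^ 2 ^ m + C 2 : (ZMod 3)[X]) := by
  induction m with
  | zero => simpa using tri_base
  | succ n ih =>
    rw [show n + 1 + 1 = n + 2 from rfl, tri_comp n]
    refine key _ (tri_monic n) ih ?_ (tri_coeff0 n)
    rw [tri_natDegree n]
    exact (Nat.even_pow).2 ⟨even_two, Nat.succ_ne_zero n⟩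

theorem trinomial_irreducible_F3 (i : ℕ) (hi : 3 ≤ i) :
    Irreducible (X ^ (2 ^ (i - 2)) + X ^ (2 ^ (i - 3)) + 2 : (ZMod 3)[X]) := by
  have h1 : i - 2 = (i - 3) + 1 := by omega
  rw [h1, ← C2_eq]
  exact tri_irr (i - 3)
end

section
/- Let r be an odd prime, q a power of r, and suppose there exist infinitely many primes p such that every irreducible factor of X^p − 1 over F_q has at most 3 nonzero terms. Then a contradiction follows; equivalently, the set of primes p for which X^p − 1 is 3-sparse over F_q is finite (contained in the set of prime divisors of q² − 1 together with r). -/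
open Polynomial IntermediateField
set_option maxHeartbeats 1000000


private lemma monic_eq_of_dvd' {F : Type*} [Field F] {f g : F[X]} (hf : f.Monic) (hg : g.Monic)
    (h : f ∣ g) (hdeg : g.natDegree ≤ f.natDegree) : f = g := by
  obtain ⟨w, rfl⟩ := h
  have hw : w ≠ 0 := fun h0 => hg.ne_zero (by rw [h0, mul_zero])
  have hnd := natDegree_mul hf.ne_zero hw
  have hw0 : w.natDegree = 0 := by omega
  obtain ⟨a, rfl⟩ := Polynomial.natDegree_eq_zero.mp hw0
  have h2 : (f * C a).leadingCoeff = a := by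
    rw [leadingCoeff_mul, hf.leadingCoeff, one_mul, leadingCoeff_C]
  rw [Monic] at hg
  rw [hg] at h2
  rw [← h2, map_one, mul_one]

private lemma three_pow_roots' {F K : Type*} [Field F] [Field K] [Algebra F K]
    (ψ : K →ₐ[F] K) {P : F[X]} (hP : P ≠ 0) (hdeg : P.natDegree ≤ 2)
    {x : K} (hx : aeval x P = 0) : ψ (ψ x) = x := by
  classical
  have hstep : ∀ y : K, aeval y P = 0 → aeval (ψ y) P = 0 := fun y hy => by
    rw [aeval_algHom_apply, hy, map_zero]
  by_cases h1 : ψ x = x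
  · rw [h1, h1]
  by_contra h2
  have hinj : Function.Injective ψ := ψ.toRingHom.injective
  have h3 : ψ (ψ x) ≠ ψ x := fun h => h1 (hinj h)
  set Pk := P.map (algebraMap F K) with hPkdef
  have hPk0 : Pk ≠ 0 := Polynomial.map_ne_zero hP
  have hmem : ∀ y : K, aeval y P = 0 → y ∈ Pk.roots.toFinset := fun y hy => by
    rw [Multiset.mem_toFinset, mem_roots hPk0]
    show Pk.IsRoot y
    rw [IsRoot.def, hPkdef, eval_map, ← aeval_def, hy]
  have hsub : ({x, ψ x, ψ (ψ x)} : Finset K) ⊆ Pk.roots.toFinset := by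
    intro y hy
    simp only [Finset.mem_insert, Finset.mem_singleton] at hy
    rcases hy with rfl | rfl | rfl
    · exact hmem _ hx
    · exact hmem _ (hstep _ hx)
    · exact hmem _ (hstep _ (hstep _ hx))
  have e1 : x ≠ ψ x := fun h => h1 h.symm
  have e2 : x ≠ ψ (ψ x) := fun h => h2 h.symm
  have e3 : ψ x ≠ ψ (ψ x) := fun h => h3 h.symm
  have hcard3 : ({x, ψ x, ψ (ψ x)} : Finset K).card = 3 := by
    rw [Finset.card_insert_of_notMem (by simp [e1, e2]),
        Finset.card_insert_of_notMem (by simp [e3]), Finset.card_singleton]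
  have hle := Finset.card_le_card hsub
  have h5 := Pk.roots.toFinset_card_le
  have h6 := Pk.card_roots'
  have h7 : Pk.natDegree ≤ 2 := le_trans natDegree_map_le hdeg
  omega

private lemma subset_of_mem_three' {s : Finset ℕ} {k d : ℕ} (h3 : s.card ≤ 3) (h0 : 0 ∈ s)
    (hk : k ∈ s) (hd : d ∈ s) (hk0 : k ≠ 0) (hkd : k ≠ d) (hd0 : d ≠ 0) :
    s ⊆ {0, k, d} := by
  intro x hx
  simp only [Finset.mem_insert, Finset.mem_singleton]
  by_contra hcon
  push_neg at hcon
  obtain ⟨hx0, hxk, hxd⟩ := hcon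
  have hsub : ({x, 0, k, d} : Finset ℕ) ⊆ s := by
    intro y hy
    simp only [Finset.mem_insert, Finset.mem_singleton] at hy
    rcases hy with rfl | rfl | rfl | rfl <;> assumption
  have hc : ({x, 0, k, d} : Finset ℕ).card = 4 := by
    rw [Finset.card_insert_of_notMem (by simp [hx0, hxk, hxd]),
        Finset.card_insert_of_notMem (by simp [Ne.symm hk0, Ne.symm hd0]),
        Finset.card_insert_of_notMem (by simp [hkd]), Finset.card_singleton]
  have := Finset.card_le_card hsub
  omega

private lemma eq_trinomial_of_supp' {F : Type*} [Field F] {μ : F[X]} {k d : ℕ}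
    (hmo : μ.Monic) (hdeg : μ.natDegree = d) (hsupp : μ.support ⊆ {0, k, d})
    (hk0 : k ≠ 0) (hkd : k ≠ d) (hd0 : d ≠ 0) :
    μ = X ^ d + C (μ.coeff k) * X ^ k + C (μ.coeff 0) := by
  ext m
  simp only [coeff_add, coeff_X_pow, coeff_C_mul, coeff_C]
  by_cases h1 : m = d
  · subst h1
    rw [if_pos rfl, if_neg (Ne.symm hkd), if_neg hd0]
    have hlc := hmo.coeff_natDegree
    rw [hdeg] at hlc
    rw [hlc]; ring
  by_cases h2 : m = k
  · subst h2
    rw [if_neg h1, if_pos rfl, if_neg hk0]; ring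
  by_cases h3 : m = 0
  · subst h3
    rw [if_neg h1, if_neg h2, if_pos rfl]; ring
  · have hns : m ∉ μ.support := fun hm => by
      have := hsupp hm
      simp only [Finset.mem_insert, Finset.mem_singleton] at this
      tauto
    rw [notMem_support_iff.mp hns, if_neg h1, if_neg h2, if_neg h3]; ring

private lemma eq_binomial_of_supp' {F : Type*} [Field F] {μ : F[X]} {d : ℕ}
    (hmo : μ.Monic) (hdeg : μ.natDegree = d) (hd0 : d ≠ 0) (hsupp : μ.support ⊆ {0, d}) :
    μ = X ^ d + C (μ.coeff 0) := by
  ext m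
  simp only [coeff_add, coeff_X_pow, coeff_C]
  by_cases h1 : m = d
  · subst h1
    rw [if_pos rfl, if_neg hd0]
    have hlc := hmo.coeff_natDegree
    rw [hdeg] at hlc
    rw [hlc]; ring
  by_cases h3 : m = 0
  · subst h3
    rw [if_neg h1, if_pos rfl]; ring
  · have hns : m ∉ μ.support := fun hm => by
      have := hsupp hm
      simp only [Finset.mem_insert, Finset.mem_singleton] at this
      tauto
    rw [notMem_support_iff.mp hns, if_neg h1, if_neg h3]; ring


private lemma pow_two_helper {M : Type*} [Monoid M] (x : M) (p m : ℕ) (hpm : p = 2 * m + 1)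
    (hx : x ^ p = 1) : (x ^ 2) ^ (m + 1) = x := by
  rw [← pow_mul, show 2 * (m + 1) = p + 1 by omega, pow_succ, hx, one_mul]

theorem finitely_many_three_sparse_primes (F : Type*) [Field F] [Fintype F]
    (r : ℕ) (hr : r.Prime) (hrodd : r ≠ 2) (hchar : ringChar F = r) :
    {p : ℕ | p.Prime ∧
      ∀ g : F[X], Irreducible g → g ∣ (X ^ p - 1 : F[X]) → g.support.card ≤ 3}.Finite := by
  classical
  letI : CharP F r := hchar ▸ ringChar.charP F
  haveI : Fact r.Prime := ⟨hr⟩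
  obtain ⟨nn, -, hcard⟩ := FiniteField.card F r
  set q := Fintype.card F with hqdef
  have hq2 : 2 ≤ q := Fintype.one_lt_card
  have h4 : 4 ≤ q * q := Nat.mul_le_mul hq2 hq2
  have hrq : r ≤ q := by
    rw [hcard]
    exact Nat.le_self_pow (by positivity) r
  apply Set.Finite.subset (Set.finite_Iic (q * q))
  rintro p ⟨hp, hsp⟩
  simp only [Set.mem_Iic]
  by_contra hgt
  push_neg at hgt
  -- now q*q < p; derive a contradiction
  have hpne2 : p ≠ 2 := by omega
  have hp_odd : Odd p := hp.odd_of_ne_two hpne2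
  have htwo : (2 : F) ≠ 0 := by
    intro h
    have h2 : ((2 : ℕ) : F) = 0 := by exact_mod_cast h
    have := (CharP.cast_eq_zero_iff F r 2).mp h2
    exact hrodd ((Nat.prime_dvd_prime_iff_eq hr Nat.prime_two).mp this)
  set K := AlgebraicClosure F
  letI : CharP K r := charP_of_injective_algebraMap (algebraMap F K).injective r
  -- Frobenius as an F-algebra endomorphism of K
  have hfrob : ∀ a : F, a ^ q = a := fun a => FiniteField.pow_card a
  let ψ : K →ₐ[F] K :=
    { toFun := fun x => x ^ q
      map_one' := one_pow q
      map_mul' := fun x y => mul_pow x y q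
      map_zero' := zero_pow (by omega)
      map_add' := fun x y => by
        simp only [hcard]
        exact add_pow_char_pow x y r nn
      commutes' := fun a => by
        show (algebraMap F K a) ^ q = algebraMap F K a
        rw [← map_pow, hfrob] }
  have hψ : ∀ x : K, ψ x = x ^ q := fun _ => rfl
  -- primitive p-th root of unity
  have hqlt : q < q * q := by nlinarith
  have hrdvdp : ¬ (r ∣ p) := by
    intro hdvd
    have := (Nat.prime_dvd_prime_iff_eq hr hp).mp hdvd
    omega
  haveI : NeZero ((p : ℕ) : K) := ⟨by
    rw [Ne, CharP.cast_eq_zero_iff K r p]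
    exact hrdvdp⟩
  obtain ⟨ζ, hζ0⟩ := IsAlgClosed.exists_root (cyclotomic p K) (by
    rw [degree_cyclotomic]
    exact_mod_cast (Nat.totient_pos.mpr hp.pos).ne')
  have hζ : IsPrimitiveRoot ζ p := isRoot_cyclotomic_iff.mp hζ0
  have hζp : ζ ^ p = 1 := hζ.pow_eq_one
  have hζne : ζ ≠ 0 := by
    intro h
    rw [h, zero_pow hp.pos.ne'] at hζp
    exact zero_ne_one hζp
  -- X^p - 1 facts
  have hXpC : (X ^ p - 1 : F[X]) = X ^ p - C 1 := by rw [C_1]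
  have hXpne : (X ^ p - 1 : F[X]) ≠ 0 := by
    rw [hXpC]; exact X_pow_sub_C_ne_zero hp.pos 1
  have hXpdeg : (X ^ p - 1 : F[X]).natDegree = p := by
    rw [hXpC]; exact natDegree_X_pow_sub_C
  -- minimal polynomial of ζ
  have hintζ : IsIntegral F ζ := (Algebra.IsAlgebraic.isAlgebraic ζ).isIntegral
  set μ := minpoly F ζ with hμdef
  have hμmo : μ.Monic := minpoly.monic hintζ
  have hμirr : Irreducible μ := minpoly.irreducible hintζ
  have hμroot : aeval ζ μ = 0 := minpoly.aeval F ζ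
  have hμdvd : μ ∣ (X ^ p - 1 : F[X]) := minpoly.dvd F ζ (by
    rw [map_sub, map_one, aeval_X_pow, hζp, sub_self])
  set d := μ.natDegree with hddef
  have hdp : d ≤ p := by
    have h := natDegree_le_of_dvd hμdvd hXpne
    rw [hXpdeg] at h
    exact h
  have hd3 : 3 ≤ d := by
    by_contra hlt
    push_neg at hlt
    have hfix := three_pow_roots' ψ (show μ ≠ 0 from minpoly.ne_zero hintζ)
      (show μ.natDegree ≤ 2 by omega) hμroot
    rw [hψ, hψ] at hfix
    rw [← pow_mul] at hfix
    have hone : ζ ^ (q * q - 1) = 1 := by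
      have h1 : ζ ^ (q * q - 1) * ζ = 1 * ζ := by
        rw [one_mul, ← pow_succ, show q * q - 1 + 1 = q * q by omega, hfix]
      exact mul_right_cancel₀ hζne h1
    have := Nat.le_of_dvd (by omega) (hζ.dvd_of_pow_eq_one _ hone)
    omega
  -- support of μ
  have hc0 : μ.coeff 0 ≠ 0 := minpoly.coeff_zero_ne_zero hintζ hζne
  have hsupp0 : 0 ∈ μ.support := mem_support_iff.mpr hc0
  have hlcd : μ.coeff d = 1 := hμmo.coeff_natDegree
  have hsuppd : d ∈ μ.support := mem_support_iff.mpr (by rw [hlcd]; exact one_ne_zero)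
  have hcard3 : μ.support.card ≤ 3 := hsp μ hμirr hμdvd
  by_cases hex : ∃ k ∈ μ.support, k ≠ 0 ∧ k ≠ d
  case neg =>
    -- binomial case
    push_neg at hex
    have hsub : μ.support ⊆ {0, d} := by
      intro x hx
      simp only [Finset.mem_insert, Finset.mem_singleton]
      rcases eq_or_ne x 0 with rfl | h
      · exact Or.inl rfl
      · exact Or.inr (hex x hx h)
    have hform : μ = X ^ d + C (μ.coeff 0) :=
      eq_binomial_of_supp' hμmo rfl (by omega) hsub
    have heval := hμroot
    rw [hform, map_add, aeval_X_pow, aeval_C] at heval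
    have hζd : ζ ^ d = algebraMap F K (-(μ.coeff 0)) := by
      rw [map_neg]
      exact eq_neg_of_add_eq_zero_left heval
    have h1 : ζ ^ (d * (q - 1)) = 1 := by
      rw [pow_mul, hζd, ← map_pow,
        FiniteField.pow_card_sub_one_eq_one _ (neg_ne_zero.mpr hc0), map_one]
    rcases (Nat.Prime.dvd_mul hp).mp (hζ.dvd_of_pow_eq_one _ h1) with hdv | hdv
    · -- p ∣ d hence d = p and μ = X^p - 1, contradicting irreducibility
      have hdp' : d = p := le_antisymm hdp (Nat.le_of_dvd (by omega) hdv)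
      have hμeq : μ = X ^ p - 1 :=
        monic_eq_of_dvd' hμmo (by rw [hXpC]; exact monic_X_pow_sub_C 1 hp.pos.ne') hμdvd
          (by rw [hXpdeg, ← hdp'])
      have hroot1 : IsRoot μ 1 := by
        rw [hμeq]
        simp [IsRoot]
      obtain ⟨t, ht⟩ := dvd_iff_isRoot.mpr hroot1
      rcases hμirr.isUnit_or_isUnit ht with hu | hu
      · exact (not_isUnit_X_sub_C (1 : F)) hu
      · have htne : t ≠ 0 := fun h0 => by
          rw [h0, mul_zero] at ht
          exact (hμmo.ne_zero) ht
        have hnd : μ.natDegree = 1 := by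
          rw [ht, natDegree_mul (X_sub_C_ne_zero 1) htne, natDegree_X_sub_C,
            natDegree_eq_zero_of_isUnit hu]
        omega
    · have := Nat.le_of_dvd (by omega) hdv
      omega
  case pos =>
  obtain ⟨k, hkmem, hk0, hkd⟩ := hex
  have hbne : μ.coeff k ≠ 0 := mem_support_iff.mp hkmem
  set b := μ.coeff k with hbdef
  set c := μ.coeff 0 with hcdef
  have hkd' : k < d := lt_of_le_of_ne (le_natDegree_of_mem_supp k hkmem) hkd
  have hsub : μ.support ⊆ {0, k, d} :=
    subset_of_mem_three' hcard3 hsupp0 hkmem hsuppd hk0 hkd (by omega)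
  have hμform : μ = X ^ d + C b * X ^ k + C c :=
    eq_trinomial_of_supp' hμmo rfl hsub hk0 hkd (by omega)
  have heval := hμroot
  rw [hμform, map_add, map_add, aeval_X_pow, map_mul, aeval_C, aeval_X_pow, aeval_C] at heval
  -- heval : ζ^d + algebraMap b * ζ^k + algebraMap c = 0
  by_cases h2k : k + k = d
  · -- the case d = 2k : ζ^k satisfies a quadratic over F
    set Q : F[X] := X ^ 2 + C b * X + C c with hQdef
    have hQne : Q ≠ 0 := by
      intro h0
      have h2 : Q.coeff 2 = 1 := by
        rw [hQdef]
        simp [coeff_X_pow, coeff_X, coeff_C]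
      rw [h0] at h2
      simp at h2
    have hQdeg : Q.natDegree ≤ 2 := by
      rw [hQdef]
      refine le_trans (natDegree_add_le _ _) ?_
      simp only [natDegree_C, Nat.max_le, Nat.zero_le, and_true]
      refine le_trans (natDegree_add_le _ _) ?_
      simp only [natDegree_X_pow, Nat.max_le, le_refl, true_and]
      exact le_trans (natDegree_mul_le) (by simp [natDegree_C, natDegree_X])
    have hQroot : aeval (ζ ^ k) Q = 0 := by
      rw [hQdef, map_add, map_add, aeval_X_pow, map_mul, aeval_C, aeval_X, aeval_C]
      rw [← pow_mul, show k * 2 = d by omega]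
      exact heval
    have hfix := three_pow_roots' ψ hQne hQdeg hQroot
    rw [hψ, hψ, ← pow_mul] at hfix
    have hθne : ζ ^ k ≠ 0 := pow_ne_zero _ hζne
    have hone : (ζ ^ k) ^ (q * q - 1) = 1 := by
      have h1 : (ζ ^ k) ^ (q * q - 1) * ζ ^ k = 1 * ζ ^ k := by
        rw [one_mul, ← pow_succ, show q * q - 1 + 1 = q * q by omega, hfix]
      exact mul_right_cancel₀ hθne h1
    rw [← pow_mul] at hone
    rcases (Nat.Prime.dvd_mul hp).mp (hζ.dvd_of_pow_eq_one _ hone) with hdv | hdv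
    · have := Nat.le_of_dvd (by omega) hdv
      omega
    · have := Nat.le_of_dvd (by omega) hdv
      omega
  · -- main case: d ≠ 2k; compare with the minimal polynomial of ζ²
    have hintζ2 : IsIntegral F (ζ ^ 2) := (Algebra.IsAlgebraic.isAlgebraic (ζ ^ 2)).isIntegral
    have hintζn : IsIntegral F (-ζ) := (Algebra.IsAlgebraic.isAlgebraic (-ζ)).isIntegral
    set ν := minpoly F (ζ ^ 2) with hνdef
    have hνmo : ν.Monic := minpoly.monic hintζ2
    obtain ⟨m, hm⟩ := hp_odd
    have hadj2 : F⟮ζ ^ 2⟯ = F⟮ζ⟯ := by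
      apply le_antisymm
      · rw [IntermediateField.adjoin_simple_le_iff]
        exact pow_mem (IntermediateField.mem_adjoin_simple_self F ζ) 2
      · rw [IntermediateField.adjoin_simple_le_iff]
        have hζeq : (ζ ^ 2) ^ (m + 1) = ζ := pow_two_helper ζ p m hm hζp
        have hmem2 : (ζ ^ 2) ^ (m + 1) ∈ F⟮ζ ^ 2⟯ :=
          pow_mem (IntermediateField.mem_adjoin_simple_self F (ζ ^ 2)) (m + 1)
        rwa [hζeq] at hmem2
    have hadjn : F⟮-ζ⟯ = F⟮ζ⟯ := by
      apply le_antisymm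
      · rw [IntermediateField.adjoin_simple_le_iff]
        exact neg_mem (IntermediateField.mem_adjoin_simple_self F ζ)
      · rw [IntermediateField.adjoin_simple_le_iff]
        have hmem2 : -(-ζ) ∈ F⟮-ζ⟯ :=
          neg_mem (IntermediateField.mem_adjoin_simple_self F (-ζ))
        rwa [neg_neg] at hmem2
    have hfr := IntermediateField.adjoin.finrank hintζ
    have hfr2 := IntermediateField.adjoin.finrank hintζ2
    have hfrn := IntermediateField.adjoin.finrank hintζn
    rw [hadj2] at hfr2
    rw [hadjn] at hfrn
    have hνdeg : ν.natDegree = d := by rw [← hfr2, hfr]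
    have hdegn : (minpoly F (-ζ)).natDegree = d := by rw [← hfrn, hfr]
    -- μ' : explicit form of the minimal polynomial of -ζ
    set b2 : F := (-1 : F) ^ (d + k) * b with hb2def
    set c2 : F := (-1 : F) ^ d * c with hc2def
    have hb2ne : b2 ≠ 0 := mul_ne_zero (pow_ne_zero _ (neg_ne_zero.mpr one_ne_zero)) hbne
    have hc2ne : c2 ≠ 0 := mul_ne_zero (pow_ne_zero _ (neg_ne_zero.mpr one_ne_zero)) hc0
    set μ' : F[X] := X ^ d + C b2 * X ^ k + C c2 with hμ'def
    have hlow : (C b2 * X ^ k + C c2).degree < (X ^ d : F[X]).degree := by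
      rw [degree_X_pow]
      refine lt_of_le_of_lt (degree_add_le _ _) ?_
      rw [max_lt_iff]
      constructor
      · exact lt_of_le_of_lt (degree_C_mul_X_pow_le _ _) (by exact_mod_cast hkd')
      · exact lt_of_le_of_lt degree_C_le (by exact_mod_cast (show 0 < d by omega))
    have hμ'alt : μ' = X ^ d + (C b2 * X ^ k + C c2) := by rw [hμ'def, add_assoc]
    have hμ'mo : μ'.Monic := by
      rw [hμ'alt]
      exact (monic_X_pow d).add_of_left hlow
    have hμ'deg : μ'.natDegree = d := by
      rw [hμ'alt, natDegree_add_eq_left_of_degree_lt hlow, natDegree_X_pow]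
    have hμ'root : aeval (-ζ) μ' = 0 := by
      rw [hμ'def, map_add, map_add, aeval_X_pow, map_mul, aeval_C, aeval_C]
      rw [aeval_X_pow]
      rw [hb2def, hc2def]
      simp only [map_mul, map_pow, map_neg, map_one]
      rw [neg_pow ζ d, neg_pow ζ k]
      have hkk : ((-1 : K)) ^ (d + k) * (-1 : K) ^ k = (-1 : K) ^ d := by
        rw [← pow_add, show d + k + k = d + (k + k) by omega, pow_add,
          (show Even (k + k) from ⟨k, rfl⟩).neg_one_pow, mul_one]
      calc (-1 : K) ^ d * ζ ^ d + (-1 : K) ^ (d + k) * algebraMap F K b * ((-1 : K) ^ k * ζ ^ k)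
            + (-1 : K) ^ d * algebraMap F K c
          = (-1 : K) ^ d * (ζ ^ d + algebraMap F K b * ζ ^ k + algebraMap F K c)
            + ((-1 : K) ^ (d + k) * (-1 : K) ^ k - (-1 : K) ^ d) * (algebraMap F K b * ζ ^ k) := by
            ring
        _ = 0 := by rw [heval, hkk, sub_self, zero_mul, mul_zero, zero_add]
    have hminn : minpoly F (-ζ) = μ' := by
      apply monic_eq_of_dvd' (minpoly.monic hintζn) hμ'mo (minpoly.dvd F (-ζ) hμ'root)
      rw [hμ'deg, hdegn]
    have hμ'irr : Irreducible μ' := hminn ▸ minpoly.irreducible hintζn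
    have hμne : μ ≠ μ' := by
      intro heq2
      have hroot2 : aeval (-ζ) μ = 0 := by rw [heq2]; exact hμ'root
      obtain ⟨t, ht⟩ := hμdvd
      have hz : aeval (-ζ) (X ^ p - 1 : F[X]) = 0 := by
        rw [ht, map_mul, hroot2, zero_mul]
      rw [map_sub, map_one, aeval_X_pow] at hz
      rw [Odd.neg_pow ⟨m, by omega⟩, hζp] at hz
      have h2K : (2 : K) = 0 := by linear_combination -hz
      have h2K' : ((2 : ℕ) : K) = 0 := by exact_mod_cast h2K
      have := (CharP.cast_eq_zero_iff K r 2).mp h2K'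
      exact hrodd ((Nat.prime_dvd_prime_iff_eq hr Nat.prime_two).mp this)
    have hdvd1 : μ ∣ expand F 2 ν := minpoly.dvd F ζ (by
      rw [expand_aeval]
      exact minpoly.aeval F (ζ ^ 2))
    have hdvd2 : μ' ∣ expand F 2 ν := by
      rw [← hminn]
      apply minpoly.dvd F (-ζ)
      rw [expand_aeval, neg_sq]
      exact minpoly.aeval F (ζ ^ 2)
    have hnotdvd : ¬ μ ∣ μ' := fun hdd =>
      hμne (monic_eq_of_dvd' hμmo hμ'mo hdd (by rw [hμ'deg]))
    have hcop : IsCoprime μ μ' := (hμirr.coprime_iff_not_dvd).mpr hnotdvd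
    have hE : μ * μ' = expand F 2 ν := by
      apply monic_eq_of_dvd' (hμmo.mul hμ'mo) (hνmo.expand (by norm_num))
        (hcop.mul_dvd hdvd1 hdvd2)
      rw [natDegree_expand, hνdeg, natDegree_mul hμmo.ne_zero hμ'mo.ne_zero, hμ'deg]
      omega
    have hprod : μ * μ' =
        X ^ (d + d) + C b2 * X ^ (d + k) + C c2 * X ^ d + C b * X ^ (k + d)
          + C (b * b2) * X ^ (k + k) + C (b * c2) * X ^ k + C c * X ^ d
          + C (c * b2) * X ^ k + C (c * c2) := by
      rw [hμform, hμ'def]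
      simp only [C_mul]
      ring
    have hcoeff : ∀ m' : ℕ, (μ * μ').coeff m' =
        (if m' = d + d then (1 : F) else 0) + (if m' = d + k then b2 else 0)
        + (if m' = d then c2 else 0) + (if m' = k + d then b else 0)
        + (if m' = k + k then b * b2 else 0) + (if m' = k then b * c2 else 0)
        + (if m' = d then c else 0) + (if m' = k then c * b2 else 0)
        + (if m' = 0 then c * c2 else 0) := by
      intro m'
      rw [hprod]
      simp only [coeff_add, coeff_C_mul, coeff_X_pow, coeff_C, mul_ite, mul_one, mul_zero]
    have hget : ∀ t : ℕ, ν.coeff t =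
        (if 2 * t = d + d then (1 : F) else 0) + (if 2 * t = d + k then b2 else 0)
        + (if 2 * t = d then c2 else 0) + (if 2 * t = k + d then b else 0)
        + (if 2 * t = k + k then b * b2 else 0) + (if 2 * t = k then b * c2 else 0)
        + (if 2 * t = d then c else 0) + (if 2 * t = k then c * b2 else 0)
        + (if 2 * t = 0 then c * c2 else 0) := by
      intro t
      rw [← coeff_expand_mul' (show 0 < 2 by norm_num) ν t, ← hE, hcoeff]
    -- the coefficient at k + k shows k ∈ ν.support
    have h1 := hget k
    rw [if_neg (show ¬(2 * k = d + d) by omega), if_neg (show ¬(2 * k = d + k) by omega),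
      if_neg (show ¬(2 * k = d) by omega), if_neg (show ¬(2 * k = k + d) by omega),
      if_pos (show 2 * k = k + k by omega), if_neg (show ¬(2 * k = k) by omega),
      if_neg (show ¬(2 * k = d) by omega), if_neg (show ¬(2 * k = k) by omega),
      if_neg (show ¬(2 * k = 0) by omega)] at h1
    simp only [zero_add, add_zero] at h1
    have hνmemk : k ∈ ν.support := mem_support_iff.mpr (by
      rw [h1]
      exact mul_ne_zero hbne hb2ne)
    have hν3 : ν.support.card ≤ 3 := hsp ν (minpoly.irreducible hintζ2) (minpoly.dvd F (ζ ^ 2) (by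
      rw [map_sub, map_one, aeval_X_pow, pow_right_comm, hζp, one_pow, sub_self]))
    have hν0 : 0 ∈ ν.support := mem_support_iff.mpr
      (minpoly.coeff_zero_ne_zero hintζ2 (pow_ne_zero 2 hζne))
    have hνd : d ∈ ν.support := mem_support_iff.mpr (by
      have hlc2 := hνmo.coeff_natDegree
      rw [hνdeg] at hlc2
      rw [hlc2]
      exact one_ne_zero)
    have hνsub : ν.support ⊆ {0, k, d} :=
      subset_of_mem_three' hν3 hν0 hνmemk hνd hk0 hkd (by omega)
    have hmemlim : ∀ j : ℕ, ν.coeff j ≠ 0 → j = 0 ∨ j = k ∨ j = d := fun j hj => by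
      have := hνsub (mem_support_iff.mpr hj)
      simpa using this
    rcases Nat.even_or_odd d with hde | hdo
    · -- d even: the coefficient at d gives a fourth support element
      obtain ⟨dd, hdd⟩ := hde
      have h2 := hget dd
      rw [if_neg (show ¬(2 * dd = d + d) by omega), if_neg (show ¬(2 * dd = d + k) by omega),
        if_pos (show 2 * dd = d by omega), if_neg (show ¬(2 * dd = k + d) by omega),
        if_neg (show ¬(2 * dd = k + k) by omega), if_neg (show ¬(2 * dd = k) by omega),
        if_pos (show 2 * dd = d by omega), if_neg (show ¬(2 * dd = k) by omega),
        if_neg (show ¬(2 * dd = 0) by omega)] at h2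
      simp only [zero_add, add_zero] at h2
      have hval : c2 + c = 2 * c := by
        rw [hc2def, Even.neg_one_pow ⟨dd, hdd⟩, one_mul, two_mul]
      rw [hval] at h2
      have hne4 : ν.coeff dd ≠ 0 := by
        rw [h2]
        exact mul_ne_zero htwo hc0
      rcases hmemlim _ hne4 with h | h | h <;> omega
    · rcases Nat.even_or_odd k with hke | hko
      · -- d odd, k even: the coefficient at k gives a fourth support element
        obtain ⟨kk, hkk⟩ := hke
        obtain ⟨dm, hdm⟩ := hdo
        have h2 := hget kk
        rw [if_neg (show ¬(2 * kk = d + d) by omega), if_neg (show ¬(2 * kk = d + k) by omega),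
          if_neg (show ¬(2 * kk = d) by omega), if_neg (show ¬(2 * kk = k + d) by omega),
          if_neg (show ¬(2 * kk = k + k) by omega), if_pos (show 2 * kk = k by omega),
          if_neg (show ¬(2 * kk = d) by omega), if_pos (show 2 * kk = k by omega),
          if_neg (show ¬(2 * kk = 0) by omega)] at h2
        simp only [zero_add, add_zero] at h2
        have hno1 : ((-1 : F)) ^ d = -1 := Odd.neg_one_pow ⟨dm, by omega⟩
        have hno2 : ((-1 : F)) ^ (d + k) = -1 := Odd.neg_one_pow ⟨dm + kk, by omega⟩
        have hval : b * c2 + c * b2 = -(2 * (b * c)) := by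
          rw [hc2def, hb2def, hno1, hno2]
          ring
        rw [hval] at h2
        have hne4 : ν.coeff kk ≠ 0 := by
          rw [h2]
          exact neg_ne_zero.mpr (mul_ne_zero htwo (mul_ne_zero hbne hc0))
        rcases hmemlim _ hne4 with h | h | h <;> omega
      · -- d odd, k odd: the coefficient at d + k gives a fourth support element
        obtain ⟨dm, hdm⟩ := hdo
        obtain ⟨km, hkm⟩ := hko
        have h2 := hget (dm + km + 1)
        rw [if_neg (show ¬(2 * (dm + km + 1) = d + d) by omega),
          if_pos (show 2 * (dm + km + 1) = d + k by omega),
          if_neg (show ¬(2 * (dm + km + 1) = d) by omega),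
          if_pos (show 2 * (dm + km + 1) = k + d by omega),
          if_neg (show ¬(2 * (dm + km + 1) = k + k) by omega),
          if_neg (show ¬(2 * (dm + km + 1) = k) by omega),
          if_neg (show ¬(2 * (dm + km + 1) = d) by omega),
          if_neg (show ¬(2 * (dm + km + 1) = k) by omega),
          if_neg (show ¬(2 * (dm + km + 1) = 0) by omega)] at h2
        simp only [zero_add, add_zero] at h2
        have hno2 : ((-1 : F)) ^ (d + k) = 1 := Even.neg_one_pow ⟨dm + km + 1, by omega⟩
        have hval : b2 + b = 2 * b := by
          rw [hb2def, hno2]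
          ring
        rw [hval] at h2
        have hne4 : ν.coeff (dm + km + 1) ≠ 0 := by
          rw [h2]
          exact mul_ne_zero htwo hbne
        rcases hmemlim _ hne4 with h | h | h <;> omega
end
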